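/- arXiv:2106.12148 — 7 statements merged into one kernel-verified Lean document; each statement's English description precedes it below -/
import Mathlib

section
/- For every even integer n ≥ 4, the theta graph θ_{1,2,n−2}, i.e., the graph obtained from the cycle C_{n−1} by adding one new vertex joined to two adjacent vertices of the cycle, is an almost self-centered graph of order n. -/
open SimpleGraph

/-- The eccentricity of a vertex `v`: the maximum distance from `v` to any vertex. -/
noncomputable def graphEcc {V : Type*} [Fintype V] (G : SimpleGraph V) (v : V) : ℕ :=
  Finset.univ.sup fun u => G.dist v u

/-- The radius of a graph: the minimum eccentricity over all vertices. -/
noncomputable def graphRadius {V : Type*} [Fintype V] (G : SimpleGraph V) : ℕ :=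
  sInf (Set.range (graphEcc G))

/-- The diameter of a graph: the maximum eccentricity over all vertices. -/
noncomputable def graphDiam {V : Type*} [Fintype V] (G : SimpleGraph V) : ℕ :=
  Finset.univ.sup (graphEcc G)

/-- A connected graph of order `n` is almost self-centered if it has exactly `n - 2`
central vertices (vertices whose eccentricity equals the radius). -/
def IsAlmostSelfCentered {V : Type*} [Fintype V] (G : SimpleGraph V) : Prop :=
  G.Connected ∧ Nat.card {v : V | graphEcc G v = graphRadius G} = Fintype.card V - 2

/-- A connected graph of order `n` is almost peripheral if it has exactly `n - 1`
peripheral vertices (vertices whose eccentricity equals the diameter). -/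
def IsAlmostPeripheral {V : Type*} [Fintype V] (G : SimpleGraph V) : Prop :=
  G.Connected ∧ Nat.card {v : V | graphEcc G v = graphDiam G} = Fintype.card V - 1

/-- The theta graph `θ_{1,2,m-1}` realised as the graph obtained from the cycle `C_m`
by adding one new vertex joined to two adjacent vertices of the cycle. -/
def thetaOneTwo (m : ℕ) : SimpleGraph (Fin m ⊕ Unit) :=
  SimpleGraph.fromRel fun a b =>
    match a, b with
    | Sum.inl i, Sum.inl j => (SimpleGraph.cycleGraph m).Adj i j
    | Sum.inl i, Sum.inr _ => (i : ℕ) = 0 ∨ (i : ℕ) = 1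
    | _, _ => False

namespace ThetaAux

def cd (m i j : ℕ) : ℕ := min (max i j - min i j) (m - (max i j - min i j))

def Dfun (m : ℕ) : (Fin m ⊕ Unit) → (Fin m ⊕ Unit) → ℕ
  | Sum.inl i, Sum.inl j => cd m i j
  | Sum.inl i, Sum.inr _ => 1 + min (cd m i 0) (cd m i 1)
  | Sum.inr _, Sum.inl j => 1 + min (cd m 0 j) (cd m 1 j)
  | Sum.inr _, Sum.inr _ => 0

lemma sub_val {m : ℕ} (u v : Fin m) : (u - v).val = (u.val + (m - v.val)) % m := by
  rw [Fin.sub_def]; simp [Nat.add_comm]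

lemma mod_small (x m : ℕ) (h1 : x < 2 * m) : x % m = if x < m then x else x - m := by
  split
  · exact Nat.mod_eq_of_lt ‹_›
  · rw [Nat.mod_eq_sub_mod (by omega), Nat.mod_eq_of_lt (by omega)]

lemma cycle_adj_iff {m : ℕ} (hm : 3 ≤ m) (u v : Fin m) :
    (cycleGraph m).Adj u v ↔ (u.val + 1 = v.val ∨ v.val + 1 = u.val ∨
      (u.val = 0 ∧ v.val + 1 = m) ∨ (v.val = 0 ∧ u.val + 1 = m)) := by
  have hu := u.isLt; have hv := v.isLt
  rw [cycleGraph_adj', sub_val, sub_val,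
    mod_small _ _ (by omega), mod_small _ _ (by omega)]
  constructor
  · intro h; rcases h with h | h <;> [skip; skip] <;> (split at h <;> omega)
  · intro h
    by_cases h1 : u.val + (m - v.val) < m <;> by_cases h2 : v.val + (m - u.val) < m <;>
      simp only [if_pos, if_neg, h1, h2, if_true, if_false] <;> omega

lemma adj_inl_inl {m : ℕ} {i j : Fin m} :
    (thetaOneTwo m).Adj (Sum.inl i) (Sum.inl j) ↔ (cycleGraph m).Adj i j := by
  constructor
  · intro h
    rcases h with ⟨_, h | h⟩
    · exact h
    · exact h.symm
  · intro h
    exact ⟨by simp [Fin.ext_iff] at *; exact fun e => h.ne (Fin.ext e), Or.inl h⟩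

lemma adj_inl_inr {m : ℕ} {i : Fin m} {u : Unit} :
    (thetaOneTwo m).Adj (Sum.inl i) (Sum.inr u) ↔ ((i : ℕ) = 0 ∨ (i : ℕ) = 1) := by
  constructor
  · intro h
    rcases h with ⟨_, h | h⟩
    · exact h
    · exact h.elim
  · intro h
    exact ⟨by simp, Or.inl h⟩

lemma not_adj_inr_inr {m : ℕ} {u v : Unit} :
    ¬ (thetaOneTwo m).Adj (Sum.inr u) (Sum.inr v) := by
  intro h
  rcases h with ⟨hne, h | h⟩ <;> exact h

lemma Dfun_lip {m k : ℕ} (hm : m = 2 * k + 1) (hk : 1 ≤ k) (v a b : Fin m ⊕ Unit)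
    (h : (thetaOneTwo m).Adj a b) : Dfun m v b ≤ Dfun m v a + 1 := by
  have h3 : 3 ≤ m := by omega
  rcases a with i | u <;> rcases b with j | w
  · rw [adj_inl_inl, cycle_adj_iff h3] at h
    have hi := i.isLt; have hj := j.isLt
    rcases v with x | x
    · have hx := x.isLt
      simp only [Dfun, cd]; omega
    · simp only [Dfun, cd]; omega
  · rw [adj_inl_inr] at h
    rcases v with x | x
    · have hx := x.isLt; have hi := i.isLt
      simp only [Dfun, cd]; omega
    · have hi := i.isLt
      simp only [Dfun, cd]; omega
  · rw [(thetaOneTwo m).adj_comm, adj_inl_inr] at h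
    rcases v with x | x
    · have hx := x.isLt; have hj := j.isLt
      simp only [Dfun, cd]; omega
    · have hj := j.isLt
      simp only [Dfun, cd]; omega
  · exact absurd h not_adj_inr_inr

lemma Dfun_self {m : ℕ} (v : Fin m ⊕ Unit) : Dfun m v v = 0 := by
  rcases v with i | u
  · simp only [Dfun, cd]; omega
  · rfl

lemma Dfun_le_walk {m k : ℕ} (hm : m = 2 * k + 1) (hk : 1 ≤ k) (v : Fin m ⊕ Unit) :
    ∀ {a b : Fin m ⊕ Unit} (p : (thetaOneTwo m).Walk a b),
      Dfun m v b ≤ Dfun m v a + p.length := by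
  intro a b p
  induction p with
  | nil => simp
  | cons h q ih =>
    have := Dfun_lip hm hk v _ _ h
    simp only [SimpleGraph.Walk.length_cons]
    omega

lemma Dfun_le_dist {m k : ℕ} (hm : m = 2 * k + 1) (hk : 1 ≤ k) {v w : Fin m ⊕ Unit}
    (h : (thetaOneTwo m).Reachable v w) : Dfun m v w ≤ (thetaOneTwo m).dist v w := by
  obtain ⟨p, hp⟩ := h.exists_walk_length_eq_dist
  have := Dfun_le_walk hm hk v p
  rw [Dfun_self] at this
  omega

lemma adj_succ {m k : ℕ} (hm : m = 2 * k + 1) (hk : 1 ≤ k) (i j : Fin m)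
    (h : i.val + 1 = j.val ∨ (j.val = 0 ∧ i.val + 1 = m)) :
    (thetaOneTwo m).Adj (Sum.inl i) (Sum.inl j) := by
  rw [adj_inl_inl, cycle_adj_iff (by omega)]
  omega

lemma walk_forward {m k : ℕ} (hm : m = 2 * k + 1) (hk : 1 ≤ k) :
    ∀ (t : ℕ) (i j : Fin m), i.val + t = j.val →
      ∃ p : (thetaOneTwo m).Walk (Sum.inl i) (Sum.inl j), p.length = t := by
  intro t
  induction t with
  | zero =>
    intro i j h
    obtain rfl : i = j := Fin.ext (by omega)
    exact ⟨.nil, rfl⟩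
  | succ t ih =>
    intro i j h
    have hj := j.isLt
    set i' : Fin m := ⟨i.val + 1, by omega⟩ with hi'
    obtain ⟨p, hp⟩ := ih i' j (by simp [hi']; omega)
    exact ⟨.cons (adj_succ hm hk i i' (by simp [hi'])) p, by simp [hp]⟩

lemma walk_cycle {m k : ℕ} (hm : m = 2 * k + 1) (hk : 1 ≤ k) (i j : Fin m)
    (hij : i.val ≤ j.val) :
    ∃ p : (thetaOneTwo m).Walk (Sum.inl i) (Sum.inl j), p.length ≤ cd m i j := by
  have hi := i.isLt; have hj := j.isLt
  rcases le_or_gt (2 * (j.val - i.val)) m with hle | hgt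
  · obtain ⟨p, hp⟩ := walk_forward hm hk (j.val - i.val) i j (by omega)
    exact ⟨p, by simp only [cd]; omega⟩
  · -- go backwards: j → m-1 → 0 → i, reversed
    set last : Fin m := ⟨m - 1, by omega⟩ with hlast
    set z : Fin m := ⟨0, by omega⟩ with hz
    obtain ⟨p1, hp1⟩ := walk_forward hm hk (m - 1 - j.val) j last (by simp [hlast]; omega)
    obtain ⟨p2, hp2⟩ := walk_forward hm hk i.val z i (by simp [hz])
    have e : (thetaOneTwo m).Adj (Sum.inl last) (Sum.inl z) :=
      adj_succ hm hk last z (by simp [hlast, hz]; omega)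
    refine ⟨(p1.append (.cons e p2)).reverse, ?_⟩
    simp only [SimpleGraph.Walk.length_reverse, SimpleGraph.Walk.length_append,
      SimpleGraph.Walk.length_cons, hp1, hp2, cd]
    omega

lemma dist_inl_inl {m k : ℕ} (hm : m = 2 * k + 1) (hk : 1 ≤ k) (i j : Fin m) :
    (thetaOneTwo m).dist (Sum.inl i) (Sum.inl j) ≤ cd m i.val j.val := by
  rcases le_or_gt i.val j.val with h | h
  · obtain ⟨p, hp⟩ := walk_cycle hm hk i j h
    exact le_trans (SimpleGraph.dist_le p) hp
  · obtain ⟨p, hp⟩ := walk_cycle hm hk j i (le_of_lt h)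
    rw [SimpleGraph.dist_comm]
    refine le_trans (SimpleGraph.dist_le p) (le_trans hp ?_)
    simp only [cd]; omega

lemma reach_inl_inl {m k : ℕ} (hm : m = 2 * k + 1) (hk : 1 ≤ k) (i j : Fin m) :
    (thetaOneTwo m).Reachable (Sum.inl i) (Sum.inl j) := by
  rcases le_or_gt i.val j.val with h | h
  · obtain ⟨p, _⟩ := walk_cycle hm hk i j h
    exact ⟨p⟩
  · obtain ⟨p, _⟩ := walk_cycle hm hk j i (le_of_lt h)
    exact (SimpleGraph.Walk.reachable p).symm

lemma adj_zero_inr {m k : ℕ} (hm : m = 2 * k + 1) (hk : 1 ≤ k) :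
    (thetaOneTwo m).Adj (Sum.inl ⟨0, by omega⟩) (Sum.inr ()) := by
  rw [adj_inl_inr]; left; rfl

lemma adj_one_inr {m k : ℕ} (hm : m = 2 * k + 1) (hk : 1 ≤ k) :
    (thetaOneTwo m).Adj (Sum.inl ⟨1, by omega⟩) (Sum.inr ()) := by
  rw [adj_inl_inr]; right; rfl

lemma theta_connected {m k : ℕ} (hm : m = 2 * k + 1) (hk : 1 ≤ k) :
    (thetaOneTwo m).Connected := by
  rw [SimpleGraph.connected_iff]
  refine ⟨fun a b => ?_, ⟨Sum.inr ()⟩⟩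
  have key : ∀ a : Fin m ⊕ Unit, (thetaOneTwo m).Reachable a (Sum.inr ()) := by
    intro a
    rcases a with i | u
    · exact (reach_inl_inl hm hk i ⟨0, by omega⟩).trans (adj_zero_inr hm hk).reachable
    · rcases u with ⟨⟩; rfl
  exact (key a).trans (key b).symm

lemma dist_inl_inr_le {m k : ℕ} (hm : m = 2 * k + 1) (hk : 1 ≤ k) (i : Fin m) :
    (thetaOneTwo m).dist (Sum.inl i) (Sum.inr ()) ≤ 1 + min (cd m i.val 0) (cd m i.val 1) := by
  have hc := theta_connected hm hk
  have t0 : (thetaOneTwo m).dist (Sum.inl i) (Sum.inr ()) ≤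
      (thetaOneTwo m).dist (Sum.inl i) (Sum.inl ⟨0, by omega⟩) + 1 := by
    have := hc.dist_triangle (u := Sum.inl i) (v := Sum.inl ⟨0, by omega⟩) (w := Sum.inr ())
    have h1 : (thetaOneTwo m).dist (Sum.inl (⟨0, by omega⟩ : Fin m)) (Sum.inr ()) = 1 :=
      SimpleGraph.dist_eq_one_iff_adj.mpr (adj_zero_inr hm hk)
    omega
  have t1 : (thetaOneTwo m).dist (Sum.inl i) (Sum.inr ()) ≤
      (thetaOneTwo m).dist (Sum.inl i) (Sum.inl ⟨1, by omega⟩) + 1 := by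
    have := hc.dist_triangle (u := Sum.inl i) (v := Sum.inl ⟨1, by omega⟩) (w := Sum.inr ())
    have h1 : (thetaOneTwo m).dist (Sum.inl (⟨1, by omega⟩ : Fin m)) (Sum.inr ()) = 1 :=
      SimpleGraph.dist_eq_one_iff_adj.mpr (adj_one_inr hm hk)
    omega
  have d0 := dist_inl_inl hm hk i ⟨0, by omega⟩
  have d1 := dist_inl_inl hm hk i ⟨1, by omega⟩
  simp only at d0 d1
  omega

lemma dist_inl_inr_eq {m k : ℕ} (hm : m = 2 * k + 1) (hk : 1 ≤ k) (i : Fin m) :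
    (thetaOneTwo m).dist (Sum.inl i) (Sum.inr ()) = 1 + min (cd m i.val 0) (cd m i.val 1) := by
  refine le_antisymm (dist_inl_inr_le hm hk i) ?_
  have hr : (thetaOneTwo m).Reachable (Sum.inl i) (Sum.inr ()) :=
    (reach_inl_inl hm hk i ⟨0, by omega⟩).trans (adj_zero_inr hm hk).reachable
  exact Dfun_le_dist hm hk hr

lemma dist_inl_inl_eq {m k : ℕ} (hm : m = 2 * k + 1) (hk : 1 ≤ k) (i j : Fin m) :
    (thetaOneTwo m).dist (Sum.inl i) (Sum.inl j) = cd m i.val j.val :=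
  le_antisymm (dist_inl_inl hm hk i j) (Dfun_le_dist hm hk (reach_inl_inl hm hk i j))

lemma ecc_inl {m k : ℕ} (hm : m = 2 * k + 1) (hk : 1 ≤ k) (i : Fin m) :
    graphEcc (thetaOneTwo m) (Sum.inl i) = if i.val = k + 1 then k + 1 else k := by
  have hi := i.isLt
  apply le_antisymm
  · apply Finset.sup_le
    intro u _
    rcases u with j | w
    · rw [dist_inl_inl_eq hm hk]
      have hj := j.isLt
      simp only [cd]; split <;> omega
    · rcases w
      rw [dist_inl_inr_eq hm hk]
      simp only [cd]; split <;> omega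
  · split
    · refine le_trans ?_ (Finset.le_sup (f := fun u => (thetaOneTwo m).dist (Sum.inl i) u)
        (Finset.mem_univ (Sum.inr ())))
      show _ ≤ (thetaOneTwo m).dist (Sum.inl i) (Sum.inr ())
      rw [dist_inl_inr_eq hm hk]
      simp only [cd]; omega
    · set j : Fin m := if h : i.val + k < m then ⟨i.val + k, h⟩ else ⟨i.val + k - m, by omega⟩
        with hj
      refine le_trans ?_ (Finset.le_sup (f := fun u => (thetaOneTwo m).dist (Sum.inl i) u)
        (Finset.mem_univ (Sum.inl j)))
      show _ ≤ (thetaOneTwo m).dist (Sum.inl i) (Sum.inl j)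
      rw [dist_inl_inl_eq hm hk]
      have hjv : j.val = if i.val + k < m then i.val + k else i.val + k - m := by
        rw [hj]; split <;> simp_all
      simp only [cd]
      split at hjv <;> omega

lemma ecc_inr {m k : ℕ} (hm : m = 2 * k + 1) (hk : 1 ≤ k) (u : Unit) :
    graphEcc (thetaOneTwo m) (Sum.inr u) = k + 1 := by
  rcases u
  apply le_antisymm
  · apply Finset.sup_le
    intro u _
    rcases u with j | w
    · rw [SimpleGraph.dist_comm, dist_inl_inr_eq hm hk]
      have hj := j.isLt
      simp only [cd]; omega
    · rcases w; rw [SimpleGraph.dist_self]; omega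
  · refine le_trans ?_ (Finset.le_sup (f := fun u => (thetaOneTwo m).dist (Sum.inr ()) u)
      (Finset.mem_univ (Sum.inl ⟨k + 1, by omega⟩)))
    show _ ≤ (thetaOneTwo m).dist (Sum.inr ()) (Sum.inl ⟨k + 1, by omega⟩)
    rw [SimpleGraph.dist_comm, dist_inl_inr_eq hm hk]
    simp only [cd]; omega

lemma radius_eq {m k : ℕ} (hm : m = 2 * k + 1) (hk : 1 ≤ k) :
    graphRadius (thetaOneTwo m) = k := by
  apply le_antisymm
  · apply Nat.sInf_le
    refine ⟨Sum.inl ⟨0, by omega⟩, ?_⟩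
    rw [ecc_inl hm hk, if_neg (by simp)]
  · refine le_csInf ⟨_, Set.mem_range_self (Sum.inr ())⟩ ?_
    rintro b ⟨v, rfl⟩
    rcases v with i | u
    · rw [ecc_inl hm hk]; split <;> omega
    · rw [ecc_inr hm hk]; omega

lemma main_count {m k : ℕ} (hm : m = 2 * k + 1) (hk : 1 ≤ k) :
    Nat.card {v : Fin m ⊕ Unit |
        graphEcc (thetaOneTwo m) v = graphRadius (thetaOneTwo m)} =
      Fintype.card (Fin m ⊕ Unit) - 2 := by
  have hset : {v : Fin m ⊕ Unit |
      graphEcc (thetaOneTwo m) v = graphRadius (thetaOneTwo m)} =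
      ({Sum.inl ⟨k + 1, by omega⟩, Sum.inr ()} : Set (Fin m ⊕ Unit))ᶜ := by
    ext v
    rw [Set.mem_setOf_eq, radius_eq hm hk]
    rcases v with i | u
    · rw [ecc_inl hm hk]
      simp only [Set.mem_compl_iff, Set.mem_insert_iff, Set.mem_singleton_iff]
      constructor
      · intro h
        split at h
        · omega
        · rintro (h2 | h2)
          · rw [Sum.inl.injEq, Fin.ext_iff] at h2; simp at h2; omega
          · exact absurd h2 (by simp)
      · intro h
        rw [if_neg]
        intro hc
        exact h (Or.inl (by rw [Sum.inl.injEq, Fin.ext_iff]; simp [hc]))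
    · rcases u
      rw [ecc_inr hm hk]
      simp only [Set.mem_compl_iff, Set.mem_insert_iff, Set.mem_singleton_iff]
      constructor
      · intro h; omega
      · intro h; simp at h
  rw [hset, Nat.card_coe_set_eq]
  have hne : (Sum.inl (⟨k + 1, by omega⟩ : Fin m) : Fin m ⊕ Unit) ≠ Sum.inr () := by simp
  have h2 : ({Sum.inl ⟨k + 1, by omega⟩, Sum.inr ()} : Set (Fin m ⊕ Unit)).ncard = 2 :=
    Set.ncard_pair hne
  have h3 := Set.ncard_add_ncard_compl
    ({Sum.inl ⟨k + 1, by omega⟩, Sum.inr ()} : Set (Fin m ⊕ Unit))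
  have h4 : Nat.card (Fin m ⊕ Unit) = Fintype.card (Fin m ⊕ Unit) := Nat.card_eq_fintype_card
  have h5 : Fintype.card (Fin m ⊕ Unit) = m + 1 := by simp
  omega

end ThetaAux


theorem thetaOneTwo_isAlmostSelfCentered (n : ℕ) (h4 : 4 ≤ n) (hev : Even n) :
    IsAlmostSelfCentered (thetaOneTwo (n - 1)) ∧
      Fintype.card (Fin (n - 1) ⊕ Unit) = n := by
  obtain ⟨r, hr⟩ := hev
  set k := r - 1 with hkdef
  have hk : 1 ≤ k := by omega
  have hn : n - 1 = 2 * k + 1 := by omega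
  rw [hn]
  refine ⟨⟨ThetaAux.theta_connected rfl hk, ?_⟩, ?_⟩
  · have := ThetaAux.main_count (m := 2 * k + 1) rfl hk
    unfold graphRadius
    unfold graphRadius at this
    exact this
  · simp only [Fintype.card_sum, Fintype.card_fin, Fintype.card_unit]
    omega
end

section
/- Let G be an almost self-centered graph of order n with radius r, where r ≥ 2. Then the independence number of G is at most n − r. -/
open SimpleGraph

/-- The independence number of a graph: the maximum cardinality of a set of pairwise
nonadjacent vertices. -/
noncomputable def graphIndepNum {V : Type*} [Fintype V] (G : SimpleGraph V) : ℕ :=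
  sSup {k | ∃ s : Set V, s.Pairwise (fun u v => ¬ G.Adj u v) ∧ s.ncard = k}

namespace ASCAux

variable {V : Type*} {G : SimpleGraph V}

/-- On a path, `getVert` is injective on indices up to the length. -/
lemma getVert_inj {u v : V} (p : G.Walk u v) (hp : p.IsPath) :
    ∀ i j, i ≤ p.length → j ≤ p.length → p.getVert i = p.getVert j → i = j := by
  induction p with
  | nil => intro i j hi hj _; simp only [Walk.length_nil, Nat.le_zero] at hi hj; omega
  | @cons a c d h q ih =>
    rw [Walk.cons_isPath_iff] at hp
    intro i j hi hj hij
    match i, j with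
    | 0, 0 => rfl
    | 0, (j+1) =>
      exfalso
      apply hp.2
      rw [Walk.mem_support_iff_exists_getVert]
      refine ⟨j, ?_, by simpa using hj⟩
      rw [← Walk.getVert_cons_succ q h, ← hij, Walk.getVert_zero]
    | (i+1), 0 =>
      exfalso
      apply hp.2
      rw [Walk.mem_support_iff_exists_getVert]
      refine ⟨i, ?_, by simpa using hi⟩
      rw [← Walk.getVert_cons_succ q h, hij, Walk.getVert_zero]
    | (i+1), (j+1) =>
      have := ih hp.1 i j (by simpa using hi) (by simpa using hj)
        (by rwa [Walk.getVert_cons_succ, Walk.getVert_cons_succ] at hij)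
      omega

lemma dist_getVert_le (hconn : G.Connected) {u v : V} (p : G.Walk u v) :
    ∀ i k, i ≤ k → G.dist (p.getVert i) (p.getVert k) ≤ k - i := by
  intro i k
  induction k with
  | zero => intro h; interval_cases i; simp [SimpleGraph.dist_self]
  | succ k ih =>
    intro hik
    rcases Nat.eq_or_lt_of_le hik with h | h
    · subst h; simp [SimpleGraph.dist_self]
    · have hik' : i ≤ k := by omega
      have h1 : G.dist (p.getVert k) (p.getVert (k+1)) ≤ 1 := by
        by_cases hk : k < p.length
        · have hadj := p.adj_getVert_succ hk
          calc G.dist (p.getVert k) (p.getVert (k+1)) ≤ (Walk.cons hadj Walk.nil).length :=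
                SimpleGraph.dist_le _
            _ = 1 := by simp
        · rw [p.getVert_of_length_le (by omega), p.getVert_of_length_le (by omega)]
          simp [SimpleGraph.dist_self]
      calc G.dist (p.getVert i) (p.getVert (k+1))
          ≤ G.dist (p.getVert i) (p.getVert k) + G.dist (p.getVert k) (p.getVert (k+1)) :=
            hconn.dist_triangle
        _ ≤ (k - i) + 1 := Nat.add_le_add (ih hik') h1
        _ ≤ (k + 1) - i := by omega

/-- The first vertex of a walk belonging to a set `S` containing the endpoint. -/
lemma exists_firstHit {a b : V} (Q : G.Walk a b) (S : Set V) (hb : b ∈ S) :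
    ∃ w, w ∈ S ∧ ∃ Q1 : G.Walk a w, ∀ x ∈ Q1.support, x ∈ S → x = w := by
  induction Q with
  | nil => exact ⟨_, hb, Walk.nil, by simp⟩
  | @cons a c d h q ih =>
    by_cases ha : a ∈ S
    · exact ⟨_, ha, Walk.nil, by simp⟩
    · obtain ⟨w, hw, Q1, havoid⟩ := ih hb
      refine ⟨w, hw, Walk.cons h Q1, ?_⟩
      intro x hx hxS
      rw [Walk.support_cons, List.mem_cons] at hx
      rcases hx with rfl | hx
      · exact absurd hxS ha
      · exact havoid x hx hxS

lemma isPath_append {a b c : V} (p : G.Walk a b) (q : G.Walk b c)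
    (hp : p.IsPath) (hq : q.IsPath) (h : ∀ x ∈ p.support, x ∈ q.support → x = b) :
    (p.append q).IsPath := by
  rw [Walk.isPath_def, Walk.support_append]
  apply List.Nodup.append hp.support_nodup (hq.support_nodup.tail)
  intro x hxp hxq
  have hxq' : x ∈ q.support := List.mem_of_mem_tail hxq
  have hxb : x = b := h x hxp hxq'
  subst hxb
  have := hq.support_nodup
  rw [q.support_eq_cons] at this
  exact (List.nodup_cons.mp this).1 hxq

/-- Main combinatorial lemma: in a connected graph in which every vertex has
eccentricity at least `r`, any independent set misses at least `r` vertices. -/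
lemma key {V : Type*} [Fintype V] (G : SimpleGraph V) (hconn : G.Connected)
    (r : ℕ) (hr : ∀ v : V, r ≤ graphEcc G v)
    (s : Set V) (hs : s.Pairwise fun u v => ¬ G.Adj u v) :
    s.ncard + r ≤ Fintype.card V := by
  classical
  have hV : Nonempty V := hconn.nonempty
  -- the set of path lengths
  set PS : Set ℕ := {n | ∃ (a b : V) (p : G.Walk a b), p.IsPath ∧ p.length = n} with hPS
  have hne : PS.Nonempty := ⟨0, hV.some, hV.some, Walk.nil, Walk.IsPath.nil, rfl⟩
  have hbdd : BddAbove PS := by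
    refine ⟨Fintype.card V, ?_⟩
    rintro n ⟨a, b, p, hp, rfl⟩
    exact le_of_lt hp.length_lt
  set L : ℕ := sSup PS with hLdef
  obtain ⟨a, b, p, hp, hpL⟩ := Nat.sSup_mem hne hbdd
  have hmax : ∀ (x y : V) (q : G.Walk x y), q.IsPath → q.length ≤ L :=
    fun x y q hq => le_csSup hbdd ⟨x, y, q, hq, rfl⟩
  -- Main claim: 2 * r ≤ L + 1
  have hclaim : 2 * r ≤ L + 1 := by
    by_contra hcon
    push_neg at hcon
    set j : ℕ := L / 2 with hj
    have hjL : j ≤ p.length := by omega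
    set m : V := p.getVert j with hm
    -- a vertex far from m
    obtain ⟨z, -, hz⟩ := Finset.exists_mem_eq_sup (Finset.univ : Finset V)
      Finset.univ_nonempty (fun u => G.dist m u)
    have hzr : r ≤ G.dist m z := by
      have := hr m
      rw [graphEcc] at this
      omega
    -- every support vertex of p is close to m
    have hclose : ∀ x ∈ p.support, G.dist m x ≤ L - j := by
      intro x hx
      obtain ⟨i, rfl, hiL⟩ := Walk.mem_support_iff_exists_getVert.mp hx
      rcases le_total j i with h' | h'
      · have h2 := dist_getVert_le hconn p j i h'
        rw [← hm] at h2; omega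
      · have h2 := dist_getVert_le hconn p i j h'
        rw [SimpleGraph.dist_comm (u := p.getVert i), ← hm] at h2; omega
    -- hence z is not on p
    have hznot : z ∉ p.support := by
      intro hzs
      have := hclose z hzs
      omega
    -- geodesic from z to m
    obtain ⟨Q, hQ⟩ := (hconn z m).exists_walk_length_eq_dist
    have hmp : m ∈ p.support :=
      Walk.mem_support_iff_exists_getVert.mpr ⟨j, rfl, hjL⟩
    obtain ⟨w, hw, Q1, havoid⟩ := exists_firstHit Q {x | x ∈ p.support} hmp
    have hwp : w ∈ p.support := hw
    -- R : path from w to z avoiding p except at w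
    set R : G.Walk w z := Q1.reverse.bypass with hR
    have hRpath : R.IsPath := Walk.bypass_isPath _
    have hRsupp : ∀ x ∈ R.support, x ∈ p.support → x = w := by
      intro x hx hxp
      have : x ∈ Q1.reverse.support := Walk.support_bypass_subset _ hx
      rw [Walk.support_reverse, List.mem_reverse] at this
      exact havoid x this hxp
    have hRdist : G.dist w z ≤ R.length := SimpleGraph.dist_le _
    -- split p at w
    set p1 := p.takeUntil w hwp with hp1
    set p2 := p.dropUntil w hwp with hp2
    have hsplit : p1.append p2 = p := p.take_spec hwp
    have hlen : p1.length + p2.length = L := by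
      have := congrArg Walk.length hsplit
      rw [Walk.length_append] at this
      omega
    set t : ℕ := p1.length with ht
    have htL : t ≤ p.length := p.length_takeUntil_le hwp
    -- w = p.getVert t
    have hwt : p.getVert t = w := by
      have : (p1.append p2).getVert t = w := by
        rw [Walk.getVert_append]
        simp [ht]
      rwa [hsplit] at this
    -- distance from m to w
    have hdmw1 : t ≤ j → G.dist m w ≤ j - t := by
      intro h'
      have h2 := dist_getVert_le hconn p t j h'
      rw [hwt, SimpleGraph.dist_comm (u := w), ← hm] at h2; omega
    have hdmw2 : j ≤ t → G.dist m w ≤ t - j := by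
      intro h'
      have h2 := dist_getVert_le hconn p j t h'
      rw [hwt, ← hm] at h2; omega
    -- two extended paths
    have hW1 : (p1.append R).IsPath := by
      apply isPath_append _ _ (hp.takeUntil hwp) hRpath
      intro x hxp hxR
      exact hRsupp x hxR (p.support_takeUntil_subset hwp hxp)
    have hW2 : (p2.reverse.append R).IsPath := by
      apply isPath_append _ _ (hp.dropUntil hwp).reverse hRpath
      intro x hxp hxR
      rw [Walk.support_reverse, List.mem_reverse] at hxp
      exact hRsupp x hxR (p.support_dropUntil_subset hwp hxp)
    have hb1 : t + R.length ≤ L := by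
      have := hmax _ _ _ hW1
      rw [Walk.length_append] at this
      omega
    have hb2 : (L - t) + R.length ≤ L := by
      have := hmax _ _ _ hW2
      rw [Walk.length_append, Walk.length_reverse] at this
      omega
    -- triangle inequality : r ≤ dist m z ≤ dist m w + dist w z
    have htri : G.dist m z ≤ G.dist m w + G.dist w z := hconn.dist_triangle
    rcases le_total t j with h' | h'
    · have := hdmw1 h'
      omega
    · have := hdmw2 h'
      omega
  -- Now extract r vertices outside s from the long path
  have hrL : r = 0 ∨ 2 * r - 1 ≤ p.length := by omega
  -- injection from Fin r into the complement of s
  have hcompl : r ≤ sᶜ.ncard := by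
    rcases Nat.eq_zero_or_pos r with rfl | hrpos
    · simp
    set f : Fin r → V := fun i =>
      if p.getVert (2 * i) ∈ s then p.getVert (2 * i + 1) else p.getVert (2 * i) with hf
    have hidx : ∀ i : Fin r, 2 * (i : ℕ) + 1 ≤ p.length := by
      intro i
      have := i.isLt
      omega
    have hmem : ∀ i : Fin r, f i ∈ sᶜ := by
      intro i
      rw [hf]
      by_cases h' : p.getVert (2 * i) ∈ s
      · simp only [h', if_true]
        intro hcontra
        have hadj : G.Adj (p.getVert (2 * i)) (p.getVert (2 * i + 1)) :=
          p.adj_getVert_succ (by have := hidx i; omega)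
        exact hs h' hcontra hadj.ne hadj
      · simpa [h'] using h'
    have hinj : Function.Injective f := by
      intro i i' hii
      rw [hf] at hii
      have hidxi := hidx i
      have hidxi' := hidx i'
      have key : ∀ c c' : ℕ, c ≤ p.length → c' ≤ p.length →
          p.getVert c = p.getVert c' → c = c' := fun c c' => getVert_inj p hp c c'
      ext
      by_cases h1 : p.getVert (2 * i) ∈ s <;> by_cases h2 : p.getVert (2 * i') ∈ s <;>
        simp only [h1, h2, if_true, if_false] at hii
      · have := key _ _ (by omega) (by omega) hii; omega
      · have := key _ _ (by omega) (by omega) hii; omega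
      · have := key _ _ (by omega) (by omega) hii; omega
      · have := key _ _ (by omega) (by omega) hii; omega
    calc r = (Finset.univ.image f).card := by
          rw [Finset.card_image_of_injective _ hinj, Finset.card_univ, Fintype.card_fin]
      _ = (↑(Finset.univ.image f) : Set V).ncard := (Set.ncard_coe_finset _).symm
      _ ≤ sᶜ.ncard := by
          apply Set.ncard_le_ncard _ (Set.toFinite _)
          intro x hx
          simp only [Finset.coe_image, Set.mem_image] at hx
          obtain ⟨i, -, rfl⟩ := hx
          exact hmem i
  have := Set.ncard_add_ncard_compl s
  rw [Nat.card_eq_fintype_card] at this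
  omega

end ASCAux

theorem indepNum_le_of_almostSelfCentered {V : Type*} [Fintype V]
    (G : SimpleGraph V) (n r : ℕ) (hn : Fintype.card V = n)
    (hASC : IsAlmostSelfCentered G) (hr : graphRadius G = r) (h2 : 2 ≤ r) :
    graphIndepNum G ≤ n - r := by
  obtain ⟨hconn, -⟩ := hASC
  have hr' : ∀ v : V, r ≤ graphEcc G v := by
    intro v
    have : graphRadius G ≤ graphEcc G v := Nat.sInf_le ⟨v, rfl⟩
    omega
  apply csSup_le
  · exact ⟨0, ∅, Set.pairwise_empty _, Set.ncard_empty _⟩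
  · rintro k ⟨s, hs, rfl⟩
    have := ASCAux.key G hconn r hr' s hs
    omega
end

section
/- Let n ≥ 5. Then every almost self-centered graph of order n has independence number at most n − 2, and there exists an almost self-centered graph of order n with independence number exactly n − 2. Hence the maximum independence number of an almost self-centered graph of order n is n − 2. -/
open SimpleGraph

/-!
If a connected graph on `n ≥ 4` vertices had an independent set of size `n - 1`, every vertex
outside the one remaining vertex `u` could only be adjacent to `u`, so the graph would be the star
`K_{1,n-1}`. Its radius is `1`, attained only at `u`, so it has one central vertex, not `n - 2`.

The bound is attained by `K_{2,n-3}` with a pendant vertex attached to one of the two hubs: the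
pendant vertex and the other hub are at distance `3`, every other vertex has eccentricity `2`, and
the pendant vertex together with the `n - 3` leaves of `K_{2,n-3}` is independent.
-/

namespace SimpleGraph

variable {V : Type*} {G : SimpleGraph V}

lemma graphEcc_le_iff [Fintype V] {v : V} {k : ℕ} :
    graphEcc G v ≤ k ↔ ∀ w, G.dist v w ≤ k := by
  simp [graphEcc, Finset.sup_le_iff]

lemma dist_le_graphEcc [Fintype V] (v w : V) : G.dist v w ≤ graphEcc G v :=
  graphEcc_le_iff.mp le_rfl w

lemma graphRadius_le_graphEcc [Fintype V] (v : V) : graphRadius G ≤ graphEcc G v :=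
  Nat.sInf_le ⟨v, rfl⟩

lemma exists_graphEcc_eq_graphRadius [Fintype V] [Nonempty V] :
    ∃ v, graphEcc G v = graphRadius G :=
  Nat.sInf_mem (Set.range_nonempty _)

lemma Connected.graphEcc_le_one_iff [Fintype V] (hG : G.Connected) {v : V} :
    graphEcc G v ≤ 1 ↔ ∀ w, w ≠ v → G.Adj v w := by
  refine graphEcc_le_iff.trans (forall_congr' fun w => ⟨fun h hw => ?_, fun h => ?_⟩)
  · by_contra hadj
    exact absurd h (hG.one_lt_dist_of_ne_of_not_adj hw.symm hadj).not_ge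
  · rcases eq_or_ne w v with rfl | hw
    · simp
    · exact (dist_eq_one_iff_adj.mpr (h hw)).le

lemma Connected.one_le_graphRadius [Fintype V] [Nontrivial V] (hG : G.Connected) :
    1 ≤ graphRadius G := by
  obtain ⟨v, hv⟩ := exists_graphEcc_eq_graphRadius (G := G)
  obtain ⟨w, hw⟩ := exists_ne v
  exact hv ▸ (hG.pos_dist_of_ne hw.symm).trans_le (dist_le_graphEcc v w)

lemma Connected.setOf_graphEcc_eq_graphRadius_of_forall_adj [Fintype V] [Nontrivial V]
    (hG : G.Connected) {u : V} (hu : ∀ w, w ≠ u → G.Adj u w) :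
    {v | graphEcc G v = graphRadius G} = {v | ∀ w, w ≠ v → G.Adj v w} := by
  have hrad : graphRadius G = 1 :=
    ((graphRadius_le_graphEcc u).trans (hG.graphEcc_le_one_iff.mpr hu)).antisymm
      hG.one_le_graphRadius
  ext v
  have := graphRadius_le_graphEcc (G := G) v
  simp only [Set.mem_ofPred_eq, ← hG.graphEcc_le_one_iff]
  omega

lemma graphEcc_le_two [Fintype V] {v : V} (h : ∀ w, ∃ x, G.Adj v x ∧ (x = w ∨ G.Adj x w)) :
    graphEcc G v ≤ 2 := by
  refine graphEcc_le_iff.mpr fun w => ?_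
  obtain ⟨x, hvx, rfl | hxw⟩ := h w
  · exact (dist_le hvx.toWalk).trans (by simp)
  · exact (dist_le (Walk.cons hvx hxw.toWalk)).trans (by simp)

lemma connected_of_forall_exists_adj {v : V}
    (h : ∀ w, ∃ x, G.Adj v x ∧ (x = w ∨ G.Adj x w)) : G.Connected := by
  refine (connected_iff_exists_forall_reachable G).mpr ⟨v, fun w => ?_⟩
  obtain ⟨x, hvx, rfl | hxw⟩ := h w
  · exact hvx.reachable
  · exact hvx.reachable.trans hxw.reachable

lemma Connected.three_le_dist (hG : G.Connected) {u w : V} (hne : u ≠ w) (hadj : ¬ G.Adj u w)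
    (hcommon : ∀ x, G.Adj u x → ¬ G.Adj x w) : 3 ≤ G.dist u w := by
  have : 2 < G.edist u w := two_lt_edist_iff.mpr ⟨hne, hadj, Set.eq_empty_of_forall_notMem
    fun x hx => hcommon x (G.mem_commonNeighbors.mp hx).1 (G.mem_commonNeighbors.mp hx).2.symm⟩
  rw [← (hG u w).coe_dist_eq_edist] at this
  exact_mod_cast this

lemma graphIndepNum_le [Fintype V] {k : ℕ} (h : ∀ s : Set V, G.IsIndepSet s → s.ncard ≤ k) :
    graphIndepNum G ≤ k :=
  csSup_le ⟨0, ∅, Set.pairwise_empty _, Set.ncard_empty _⟩ fun _ ⟨s, hs, hk⟩ =>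
    hk ▸ h s hs

lemma IsIndepSet.ncard_le_graphIndepNum [Fintype V] {s : Set V} (hs : G.IsIndepSet s) :
    s.ncard ≤ graphIndepNum G :=
  le_csSup ⟨Nat.card V, fun _ ⟨t, _, hk⟩ => hk ▸ Set.ncard_le_card t⟩ ⟨s, hs, rfl⟩

lemma Connected.adj_of_isIndepSet_compl_subset [Nontrivial V] (hG : G.Connected) {s : Set V}
    (hs : G.IsIndepSet s) {u : V} (hsu : sᶜ ⊆ {u}) {v : V} (hv : v ≠ u) : G.Adj u v := by
  have mem_s : ∀ x, x ≠ u → x ∈ s := fun x hx => by_contra fun h => hx (hsu h)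
  obtain ⟨w, hvw⟩ := hG.preconnected.exists_adj_of_nontrivial v
  rcases eq_or_ne w u with rfl | hw
  · exact hvw.symm
  · exact absurd hvw (hs (mem_s v hv) (mem_s w hw) hvw.ne)

lemma IsIndepSet.eq_of_forall_adj [Fintype V] (h3 : 3 ≤ Fintype.card V) {s : Set V}
    (hs : G.IsIndepSet s) {u v : V} (hsu : sᶜ ⊆ {u}) (hv : ∀ w, w ≠ v → G.Adj v w) :
    v = u := by
  classical
  by_contra hvu
  obtain ⟨w, -, hw⟩ := Finset.exists_mem_notMem_of_card_lt_card
    (s := {u, v}) (t := Finset.univ)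
    (Finset.card_le_two.trans_lt (by rw [Finset.card_univ]; omega))
  simp only [Finset.mem_insert, Finset.mem_singleton, not_or] at hw
  have mem_s : ∀ x, x ≠ u → x ∈ s := fun x hx => by_contra fun h => hx (hsu h)
  exact hs (mem_s v hvu) (mem_s w hw.1) (Ne.symm hw.2) (hv w hw.2)

end SimpleGraph

lemma IsAlmostSelfCentered.ncard_le_of_isIndepSet {V : Type*} [Fintype V] {G : SimpleGraph V}
    (hG : IsAlmostSelfCentered G) (h4 : 4 ≤ Fintype.card V) {s : Set V} (hs : G.IsIndepSet s) :
    s.ncard ≤ Fintype.card V - 2 := by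
  obtain ⟨hconn, hcard⟩ := hG
  have : Nontrivial V := Fintype.one_lt_card_iff_nontrivial.mp (by omega)
  by_contra! hlarge
  obtain ⟨u, hsu⟩ : ∃ u, sᶜ ⊆ {u} := by
    rw [← Set.ncard_le_one_iff_subset_singleton, Set.ncard_compl, Nat.card_eq_fintype_card]
    omega
  have hcentral : {v | graphEcc G v = graphRadius G} ⊆ {u} := by
    rw [hconn.setOf_graphEcc_eq_graphRadius_of_forall_adj
      fun _ hw => hconn.adj_of_isIndepSet_compl_subset hs hsu hw]
    exact fun v hv => hs.eq_of_forall_adj (by omega) hsu hv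
  have := Set.ncard_le_ncard hcentral
  rw [Set.ncard_singleton, ← Nat.card_coe_set_eq, hcard] at this
  omega

/-- `K_{2,n-3}` with hubs `0, 1` and leaves `3, …, n-1`, plus the vertex `2` pendant at `0`. -/
def hubPendantGraph (n : ℕ) : SimpleGraph (Fin n) :=
  fromRel fun u v => (u.val = 0 ∧ 2 ≤ v.val) ∨ (u.val = 1 ∧ 3 ≤ v.val)

namespace hubPendantGraph

variable {n : ℕ}

lemma adj_iff {u v : Fin n} : (hubPendantGraph n).Adj u v ↔
    (u.val = 0 ∧ 2 ≤ v.val) ∨ (v.val = 0 ∧ 2 ≤ u.val) ∨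
      (u.val = 1 ∧ 3 ≤ v.val) ∨ (v.val = 1 ∧ 3 ≤ u.val) := by
  simp only [hubPendantGraph, fromRel_adj, ne_eq, Fin.ext_iff]
  omega

lemma exists_adj_adj (hn : 4 ≤ n) {v : Fin n} (hv1 : v.val ≠ 1) (hv2 : v.val ≠ 2)
    (w : Fin n) :
    ∃ x, (hubPendantGraph n).Adj v x ∧ (x = w ∨ (hubPendantGraph n).Adj x w) := by
  by_cases hv0 : v.val = 0
  · by_cases hw : 2 ≤ w.val
    · exact ⟨w, adj_iff.mpr (by omega), .inl rfl⟩
    · refine ⟨⟨3, by omega⟩, ?_, .inr ?_⟩ <;> simp only [adj_iff] <;> omega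
  · by_cases hw : w.val = 1
    · exact ⟨w, adj_iff.mpr (by omega), .inl rfl⟩
    · refine ⟨⟨0, by omega⟩, by simp only [adj_iff, true_and]; omega, ?_⟩
      simp only [adj_iff, Fin.ext_iff, true_and]
      omega

lemma exists_not_adj (hn : 4 ≤ n) (v : Fin n) :
    ∃ w, w ≠ v ∧ ¬ (hubPendantGraph n).Adj v w := by
  by_cases hv : v.val ≤ 1
  · refine ⟨⟨1 - v.val, by omega⟩, ?_, ?_⟩ <;>
      simp only [ne_eq, Fin.ext_iff, adj_iff] <;> omega
  · by_cases hv2 : v.val = 2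
    · refine ⟨⟨3, by omega⟩, ?_, ?_⟩ <;> simp only [ne_eq, Fin.ext_iff, adj_iff] <;> omega
    · refine ⟨⟨2, by omega⟩, ?_, ?_⟩ <;> simp only [ne_eq, Fin.ext_iff, adj_iff] <;> omega

lemma connected (hn : 4 ≤ n) : (hubPendantGraph n).Connected :=
  connected_of_forall_exists_adj (v := ⟨0, by omega⟩) (exists_adj_adj hn (by simp) (by simp))

lemma three_le_dist_one_two (hn : 4 ≤ n) :
    3 ≤ (hubPendantGraph n).dist ⟨1, by omega⟩ ⟨2, by omega⟩ :=
  (connected hn).three_le_dist (by simp [Fin.ext_iff]) (by simp [adj_iff])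
    fun x h1x hx2 => by simp only [adj_iff] at h1x hx2; omega

lemma graphRadius_eq (hn : 4 ≤ n) : graphRadius (hubPendantGraph n) = 2 := by
  have : NeZero n := ⟨by omega⟩
  refine le_antisymm ((graphRadius_le_graphEcc ⟨0, by omega⟩).trans
    (graphEcc_le_two (exists_adj_adj hn (by simp) (by simp)))) ?_
  obtain ⟨v, hv⟩ := exists_graphEcc_eq_graphRadius (G := hubPendantGraph n)
  obtain ⟨w, hwv, hvw⟩ := exists_not_adj hn v
  by_contra! h
  exact hvw ((connected hn).graphEcc_le_one_iff.mp (by omega) w hwv)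

lemma setOf_graphEcc_eq_graphRadius (hn : 4 ≤ n) :
    {v | graphEcc (hubPendantGraph n) v = graphRadius (hubPendantGraph n)} =
      {⟨1, by omega⟩, ⟨2, by omega⟩}ᶜ := by
  ext v
  simp only [Set.mem_ofPred_eq, graphRadius_eq hn, Set.mem_compl_iff, Set.mem_insert_iff,
    Set.mem_singleton_iff]
  constructor
  · rintro hv (rfl | rfl)
    · have := (three_le_dist_one_two hn).trans (dist_le_graphEcc _ _)
      omega
    · have := ((three_le_dist_one_two hn).trans_eq (SimpleGraph.dist_comm ..)).trans
        (dist_le_graphEcc _ _)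
      omega
  · intro hv
    simp only [Fin.ext_iff, not_or] at hv
    have := graphRadius_le_graphEcc (G := hubPendantGraph n) v
    rw [graphRadius_eq hn] at this
    exact (graphEcc_le_two (exists_adj_adj hn hv.1 hv.2)).antisymm this

lemma isAlmostSelfCentered (hn : 4 ≤ n) : IsAlmostSelfCentered (hubPendantGraph n) := by
  refine ⟨connected hn, ?_⟩
  rw [Nat.card_coe_set_eq, setOf_graphEcc_eq_graphRadius hn, Set.ncard_compl,
    Set.ncard_pair (by simp), Nat.card_eq_fintype_card]

lemma isIndepSet : (hubPendantGraph n).IsIndepSet {v | 2 ≤ v.val} :=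
  fun u hu v hv _ => by simp only [adj_iff, Set.mem_ofPred_eq] at hu hv ⊢; omega

lemma ncard_indepSet (hn : 4 ≤ n) : {v : Fin n | 2 ≤ v.val}.ncard = n - 2 := by
  have : {v : Fin n | 2 ≤ v.val} = {⟨0, by omega⟩, ⟨1, by omega⟩}ᶜ := by
    ext v
    simp only [Set.mem_ofPred_eq, Set.mem_compl_iff, Set.mem_insert_iff, Set.mem_singleton_iff,
      Fin.ext_iff]
    omega
  rw [this, Set.ncard_compl, Set.ncard_pair (by simp), Nat.card_eq_fintype_card,
    Fintype.card_fin]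

end hubPendantGraph

theorem max_indepNum_almostSelfCentered (n : ℕ) (h5 : 5 ≤ n) :
    (∀ (V : Type) [Fintype V] (G : SimpleGraph V), Fintype.card V = n →
      IsAlmostSelfCentered G → graphIndepNum G ≤ n - 2) ∧
    (∃ G : SimpleGraph (Fin n), IsAlmostSelfCentered G ∧ graphIndepNum G = n - 2) := by
  have upper : ∀ (V : Type) [Fintype V] (G : SimpleGraph V), Fintype.card V = n →
      IsAlmostSelfCentered G → graphIndepNum G ≤ n - 2 := fun V _ G hcard hG =>
    hcard ▸ graphIndepNum_le fun _ hs => hG.ncard_le_of_isIndepSet (by omega) hs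
  have hG := hubPendantGraph.isAlmostSelfCentered (n := n) (by omega)
  refine ⟨upper, hubPendantGraph n, hG, (upper _ _ (Fintype.card_fin n) hG).antisymm ?_⟩
  calc n - 2 = {v : Fin n | 2 ≤ v.val}.ncard := (hubPendantGraph.ncard_indepSet (by omega)).symm
    _ ≤ graphIndepNum (hubPendantGraph n) := hubPendantGraph.isIndepSet.ncard_le_graphIndepNum
end

section
/- Let k ≥ 3 and let G be a k-regular almost self-centered graph of order n. Then n ≥ 2k + 2. -/
open SimpleGraph

/-- A graph is `k`-regular if every vertex has degree `k`. -/
def IsKRegular {V : Type*} (G : SimpleGraph V) (k : ℕ) : Prop :=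
  ∀ v : V, (G.neighborSet v).ncard = k

open Finset in
theorem order_ge_of_regular_almostSelfCentered {V : Type*} [Fintype V]
    (G : SimpleGraph V) (n k : ℕ) (hn : Fintype.card V = n) (hk : 3 ≤ k)
    (hreg : IsKRegular G k) (hASC : IsAlmostSelfCentered G) :
    2 * k + 2 ≤ n := by
  classical
  obtain ⟨hconn, hcard⟩ := hASC
  replace hreg : ∀ v : V, (G.neighborSet v).ncard = k := hreg
  have hne : Nonempty V := hconn.nonempty
  subst hn
  set n := Fintype.card V with hn
  set r := graphRadius G with hr
  have hdeg : ∀ v : V, (G.neighborFinset v).card = k := fun v => by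
    rw [← Set.ncard_coe_finset]
    have : (↑(G.neighborFinset v) : Set V) = G.neighborSet v := by
      rw [neighborFinset_def]; exact Set.coe_toFinset _
    rw [this]; exact hreg v
  -- k + 1 ≤ n
  have hkn : k + 1 ≤ n := by
    have := Finset.card_le_card (show G.neighborFinset (Classical.arbitrary V) ⊆
        Finset.univ.erase (Classical.arbitrary V) from fun z hz => by
      simp only [mem_neighborFinset] at hz
      exact Finset.mem_erase.mpr ⟨(G.ne_of_adj hz).symm, mem_univ _⟩)
    rw [hdeg, Finset.card_erase_of_mem (mem_univ _), Finset.card_univ] at this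
    omega
  -- radius ≤ ecc
  have hrle : ∀ v : V, r ≤ graphEcc G v := fun v => Nat.sInf_le ⟨v, rfl⟩
  have hdle : ∀ v z : V, G.dist v z ≤ graphEcc G v := fun v z =>
    Finset.le_sup (mem_univ z)
  -- central / noncentral counting
  set C := Finset.univ.filter (fun v => graphEcc G v = r) with hC
  set D := Finset.univ.filter (fun v => ¬ graphEcc G v = r) with hDdef
  have hCcard : C.card = n - 2 := by
    rw [← hcard]
    simp [hC, Nat.card_eq_fintype_card, Fintype.card_subtype]
  have hCD : C.card + D.card = n := by
    simpa using Finset.card_filter_add_card_filter_not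
      (s := Finset.univ) (p := fun v => graphEcc G v = r)
  have hDcard : D.card = 2 := by omega
  obtain ⟨u, v, huv, hD⟩ := Finset.card_eq_two.mp hDcard
  have hu : ¬ graphEcc G u = r := by
    have : u ∈ D := hD ▸ Finset.mem_insert_self u {v}
    exact (Finset.mem_filter.mp this).2
  -- key : noncentral vertices see something far away, which is noncentral
  have habove : ∀ w : V, ¬ graphEcc G w = r →
      ∃ z, z ≠ w ∧ ¬ graphEcc G z = r ∧ r + 1 ≤ G.dist w z := by
    intro w hw
    obtain ⟨z, _, hz⟩ := Finset.exists_mem_eq_sup Finset.univ univ_nonempty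
      (fun u => G.dist w u)
    have hecc : graphEcc G w = G.dist w z := hz
    have hge : r + 1 ≤ G.dist w z := by
      have h1 := hrle w
      have h2 : r < graphEcc G w := lt_of_le_of_ne h1 (fun h => hw h.symm)
      omega
    have hzw : z ≠ w := by
      intro h; subst h; rw [SimpleGraph.dist_self] at hge; omega
    refine ⟨z, hzw, fun hzc => ?_, hge⟩
    have : G.dist z w ≤ r := hzc ▸ hdle z w
    rw [SimpleGraph.dist_comm] at this
    omega
  -- radius ≥ 2
  have hr2 : 2 ≤ r := by
    by_contra hr1
    obtain ⟨c, hc⟩ : ∃ c, graphEcc G c = r := Nat.sInf_mem (Set.range_nonempty _)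
    have hdc : ∀ z : V, G.dist c z ≤ 1 := fun z => by
      have := hdle c z; omega
    obtain ⟨z, hzu, hzc, hzd⟩ := habove u hu
    have hcu : c ≠ u := fun h => hu (h ▸ hc)
    have hr0 : r ≠ 0 := by
      intro h0
      have : G.dist c u = 0 := by have := hdle c u; omega
      exact hcu ((hconn.dist_eq_zero_iff).mp this)
    have hr1' : r = 1 := by omega
    -- n ≤ k + 1, hence n = k + 1
    have hsub : Finset.univ ⊆ insert c (G.neighborFinset c) := fun z _ => by
      by_cases h : z = c
      · exact Finset.mem_insert.mpr (Or.inl h)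
      · refine Finset.mem_insert.mpr (Or.inr ?_)
        rw [mem_neighborFinset]
        have h1 : 0 < G.dist c z := hconn.pos_dist_of_ne (Ne.symm h)
        have h2 := hdc z
        exact SimpleGraph.dist_eq_one_iff_adj.mp (by omega)
    have hnk : n ≤ k + 1 := by
      calc n = Finset.univ.card := (Finset.card_univ).symm
        _ ≤ (insert c (G.neighborFinset c)).card := Finset.card_le_card hsub
        _ ≤ k + 1 := by rw [← hdeg c]; exact Finset.card_insert_le _ _
    -- u is adjacent to everything else
    have hNu : G.neighborFinset u = Finset.univ.erase u := by
      apply Finset.eq_of_subset_of_card_le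
      · intro z hz
        simp only [mem_neighborFinset] at hz
        exact Finset.mem_erase.mpr ⟨(G.ne_of_adj hz).symm, mem_univ _⟩
      · rw [Finset.card_erase_of_mem (mem_univ _), Finset.card_univ, hdeg]
        omega
    have : z ∈ G.neighborFinset u := by
      rw [hNu]; exact Finset.mem_erase.mpr ⟨hzu, mem_univ _⟩
    rw [mem_neighborFinset] at this
    have := SimpleGraph.dist_eq_one_iff_adj.mpr this
    omega
  -- d(u,v) ≥ 3
  obtain ⟨z, hzu, hzc, hzd⟩ := habove u hu
  have hzv : z = v := by
    have hzD : z ∈ D := Finset.mem_filter.mpr ⟨mem_univ _, hzc⟩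
    rw [hD, Finset.mem_insert, Finset.mem_singleton] at hzD
    tauto
  have hduv : 3 ≤ G.dist u v := by subst hzv; omega
  -- adjacency facts
  have hadj_dist : ∀ a b : V, G.Adj a b → G.dist a b = 1 := fun a b h =>
    SimpleGraph.dist_eq_one_iff_adj.mpr h
  have hunv : u ∉ G.neighborFinset v := fun h => by
    rw [mem_neighborFinset] at h
    have := hadj_dist v u h
    rw [SimpleGraph.dist_comm] at this
    omega
  have hvnu : v ∉ G.neighborFinset u := fun h => by
    rw [mem_neighborFinset] at h
    have := hadj_dist u v h
    omega
  have hunu : u ∉ G.neighborFinset u := fun h => by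
    rw [mem_neighborFinset] at h; exact G.irrefl h
  have hvnv : v ∉ G.neighborFinset v := fun h => by
    rw [mem_neighborFinset] at h; exact G.irrefl h
  have hdisj : Disjoint (G.neighborFinset u) (G.neighborFinset v) := by
    rw [Finset.disjoint_left]
    intro w hwu hwv
    rw [mem_neighborFinset] at hwu hwv
    have h1 := hadj_dist u w hwu
    have h2 := hadj_dist w v ((G.adj_comm v w).mp hwv)
    have := hconn.dist_triangle (u := u) (v := w) (w := v)
    omega
  -- counting
  have hcard2 : (insert u (insert v (G.neighborFinset u ∪ G.neighborFinset v))).card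
      = 2 * k + 2 := by
    rw [Finset.card_insert_of_notMem (by
      simp only [Finset.mem_insert, Finset.mem_union]
      push_neg
      exact ⟨huv, hunu, hunv⟩)]
    rw [Finset.card_insert_of_notMem (by
      simp only [Finset.mem_union]
      push_neg
      exact ⟨hvnu, hvnv⟩)]
    rw [Finset.card_union_of_disjoint hdisj, hdeg, hdeg]
    ring
  calc 2 * k + 2 = _ := hcard2.symm
    _ ≤ Finset.univ.card := Finset.card_le_card (Finset.subset_univ _)
    _ = n := Finset.card_univ
end

section
/- There exists a 3-regular almost self-centered graph of order 12. -/
open SimpleGraph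

/-!
The witness is a cubic graph on twelve vertices in which the two vertices `5` and `11` lie at
distance `4` from each other, while every other vertex reaches all vertices within `3` steps.
So the radius is `3` and exactly ten vertices are central. All distances are certified by
`SimpleGraph.distLE`, a bounded search that the kernel can evaluate and that agrees with
`SimpleGraph.dist` on connected graphs.
-/

namespace SimpleGraph

variable {V : Type*} [Fintype V] [DecidableEq V] (G : SimpleGraph V) [DecidableRel G.Adj]

def distLE : ℕ → V → V → Bool
  | 0, v, u => v = u
  | n + 1, v, u => v = u ∨ ∃ w, G.Adj v w ∧ distLE n w u

variable {G}

theorem distLE_iff {n : ℕ} {v u : V} :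
    G.distLE n v u ↔ ∃ p : G.Walk v u, p.length ≤ n := by
  induction n generalizing v with
  | zero =>
    simp only [distLE, decide_eq_true_eq]
    exact ⟨fun h => h ▸ ⟨.nil, le_rfl⟩, fun ⟨p, hp⟩ => p.eq_of_length_eq_zero (Nat.le_zero.mp hp)⟩
  | succ n ih =>
    simp only [distLE, decide_eq_true_eq, ih]
    constructor
    · rintro (rfl | ⟨w, hvw, p, hp⟩)
      · exact ⟨.nil, by simp⟩
      · exact ⟨.cons hvw p, by simpa using hp⟩
    · rintro ⟨_ | ⟨hvw, p⟩, hp⟩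
      · exact .inl rfl
      · exact .inr ⟨_, hvw, p, by simpa using hp⟩

theorem Reachable.dist_le_iff_distLE {n : ℕ} {v u : V} (h : G.Reachable v u) :
    G.dist v u ≤ n ↔ G.distLE n v u := by
  rw [distLE_iff]
  refine ⟨fun hn => ?_, fun ⟨p, hp⟩ => (dist_le p).trans hp⟩
  obtain ⟨p, hp⟩ := h.exists_walk_length_eq_dist
  exact ⟨p, hp ▸ hn⟩

theorem preconnected_of_distLE {n : ℕ} (h : ∀ v u, G.distLE n v u) : G.Preconnected :=
  fun v u => (distLE_iff.mp (h v u)).elim fun p _ => p.reachable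

theorem graphEcc_eq_of_distLE (hG : G.Preconnected) {n : ℕ} {v : V}
    (hle : ∀ u, G.distLE (n + 1) v u) (hlt : ∃ u, ¬G.distLE n v u) :
    graphEcc G v = n + 1 := by
  obtain ⟨u, hu⟩ := hlt
  refine le_antisymm (Finset.sup_le fun w _ => (hG v w).dist_le_iff_distLE.mpr (hle w)) ?_
  have hn : n < G.dist v u := by
    rw [← not_le, (hG v u).dist_le_iff_distLE]
    exact hu
  exact hn.trans_le (Finset.le_sup (f := G.dist v) (Finset.mem_univ u))

end SimpleGraph

theorem isKRegular_iff_isRegularOfDegree {V : Type*} (G : SimpleGraph V) [G.LocallyFinite]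
    {k : ℕ} : IsKRegular G k ↔ G.IsRegularOfDegree k := by
  simp only [IsKRegular, IsRegularOfDegree, ← card_neighborSet_eq_degree,
    Set.ncard_eq_toFinset_card', Set.toFinset_card]

def cubicEdgesOrderTwelve : List (Fin 12 × Fin 12) :=
  [(0, 3), (0, 4), (0, 7), (1, 3), (1, 10), (1, 11), (2, 7), (2, 9), (2, 11),
   (3, 6), (4, 5), (4, 8), (5, 6), (5, 8), (6, 9), (7, 11), (8, 10), (9, 10)]

def cubicGraphOrderTwelve : SimpleGraph (Fin 12) :=
  fromRel fun v w => (v, w) ∈ cubicEdgesOrderTwelve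

instance : DecidableRel cubicGraphOrderTwelve.Adj :=
  inferInstanceAs (DecidableRel (fromRel fun v w => (v, w) ∈ cubicEdgesOrderTwelve).Adj)

theorem isRegularOfDegree_cubicGraphOrderTwelve :
    cubicGraphOrderTwelve.IsRegularOfDegree 3 := by
  intro v
  revert v
  decide

theorem connected_cubicGraphOrderTwelve : cubicGraphOrderTwelve.Connected :=
  Connected.mk (preconnected_of_distLE (n := 4) (by decide))

theorem graphEcc_cubicGraphOrderTwelve (v : Fin 12) :
    graphEcc cubicGraphOrderTwelve v = if v = 5 ∨ v = 11 then 4 else 3 := by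
  have hG := connected_cubicGraphOrderTwelve.preconnected
  split_ifs <;> exact graphEcc_eq_of_distLE hG (by revert v; decide) (by revert v; decide)

theorem graphRadius_cubicGraphOrderTwelve : graphRadius cubicGraphOrderTwelve = 3 := by
  refine IsLeast.csInf_eq ⟨⟨0, by simp [graphEcc_cubicGraphOrderTwelve]⟩, ?_⟩
  rintro _ ⟨v, rfl⟩
  rw [graphEcc_cubicGraphOrderTwelve]
  split_ifs <;> norm_num

theorem exists_cubic_almostSelfCentered_order_twelve :
    ∃ G : SimpleGraph (Fin 12), IsKRegular G 3 ∧ IsAlmostSelfCentered G := by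
  refine ⟨cubicGraphOrderTwelve,
    (isKRegular_iff_isRegularOfDegree _).mpr isRegularOfDegree_cubicGraphOrderTwelve,
    connected_cubicGraphOrderTwelve, ?_⟩
  simp only [graphRadius_cubicGraphOrderTwelve, graphEcc_cubicGraphOrderTwelve]
  rw [Nat.card_eq_fintype_card]
  decide
end

section
/- For every integer k ≥ 4 there exists a k-regular almost self-centered graph of order 2k + 2. -/
open SimpleGraph

abbrev Vtx (k : ℕ) := Bool ⊕ (Bool × ZMod k)

def rel (k : ℕ) : Vtx k → Vtx k → Prop
  | Sum.inl _, Sum.inl _ => False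
  | Sum.inl a, Sum.inr (b, _) => a ≠ b
  | Sum.inr (b, _), Sum.inl a => a ≠ b
  | Sum.inr (false, i), Sum.inr (true, j) => j = i ∨ j = i + 1
  | Sum.inr (true, _), Sum.inr (false, _) => False
  | Sum.inr (false, i), Sum.inr (false, j) => j ≠ i + 1 ∧ i ≠ j + 1
  | Sum.inr (true, i), Sum.inr (true, j) => j ≠ i + 1 ∧ i ≠ j + 1

def Gk (k : ℕ) : SimpleGraph (Vtx k) := SimpleGraph.fromRel (rel k)

section Adj
variable {k : ℕ}

lemma adj_xy : ¬ (Gk k).Adj (Sum.inl false) (Sum.inl true) := by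
  simp [Gk, fromRel_adj, rel]

lemma adj_xt (j : ZMod k) : (Gk k).Adj (Sum.inl false) (Sum.inr (true, j)) := by
  simp [Gk, fromRel_adj, rel]

lemma adj_xs (i : ZMod k) : ¬ (Gk k).Adj (Sum.inl false) (Sum.inr (false, i)) := by
  simp [Gk, fromRel_adj, rel]

lemma adj_ys (i : ZMod k) : (Gk k).Adj (Sum.inl true) (Sum.inr (false, i)) := by
  simp [Gk, fromRel_adj, rel]

lemma adj_yt (j : ZMod k) : ¬ (Gk k).Adj (Sum.inl true) (Sum.inr (true, j)) := by
  simp [Gk, fromRel_adj, rel]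

lemma adj_st (i j : ZMod k) :
    (Gk k).Adj (Sum.inr (false, i)) (Sum.inr (true, j)) ↔ (j = i ∨ j = i + 1) := by
  simp [Gk, fromRel_adj, rel]

lemma adj_ss (i j : ZMod k) :
    (Gk k).Adj (Sum.inr (false, i)) (Sum.inr (false, j)) ↔ (i ≠ j ∧ j ≠ i + 1 ∧ i ≠ j + 1) := by
  simp [Gk, fromRel_adj, rel]; tauto

lemma adj_tt (i j : ZMod k) :
    (Gk k).Adj (Sum.inr (true, i)) (Sum.inr (true, j)) ↔ (i ≠ j ∧ j ≠ i + 1 ∧ i ≠ j + 1) := by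
  simp [Gk, fromRel_adj, rel]; tauto
end Adj

section DistHelpers
variable {V : Type*} {G : SimpleGraph V} {u v : V}

lemma dist_le_two' (w : V) (h1 : G.Adj u w) (h2 : G.Adj w v) : G.dist u v ≤ 2 := by
  have := SimpleGraph.dist_le (Walk.cons h1 (Walk.cons h2 Walk.nil))
  simpa using this

lemma dist_le_three' (w w' : V) (h1 : G.Adj u w) (h2 : G.Adj w w') (h3 : G.Adj w' v) :
    G.dist u v ≤ 3 := by
  have := SimpleGraph.dist_le (Walk.cons h1 (Walk.cons h2 (Walk.cons h3 Walk.nil)))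
  simpa using this

lemma two_le_dist' (h : G.Reachable u v) (hne : u ≠ v) (hadj : ¬ G.Adj u v) :
    2 ≤ G.dist u v := by
  have h0 : G.dist u v ≠ 0 := by
    intro h0
    rcases SimpleGraph.dist_eq_zero_iff_eq_or_not_reachable.mp h0 with h' | h'
    · exact hne h'
    · exact h' h
  have h1 : G.dist u v ≠ 1 := fun h1 => hadj (SimpleGraph.dist_eq_one_iff_adj.mp h1)
  omega

lemma three_le_dist' (h : G.Reachable u v) (hne : u ≠ v) (hadj : ¬ G.Adj u v)
    (hcomm : ∀ w, G.Adj u w → ¬ G.Adj w v) : 3 ≤ G.dist u v := by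
  have h2 := two_le_dist' h hne hadj
  rcases Nat.lt_or_ge (G.dist u v) 3 with hlt | hge
  · exfalso
    have hd2 : G.dist u v = 2 := by omega
    obtain ⟨w, hw⟩ := h.exists_walk_length_eq_dist
    rw [hd2] at hw
    cases w with
    | nil => simp at hw
    | cons h1 p =>
      cases p with
      | nil => simp at hw
      | cons hmid q =>
        cases q with
        | nil => exact hcomm _ h1 hmid
        | cons _ _ => simp [Walk.length_cons] at hw
  · exact hge
end DistHelpers

section Main
variable {k : ℕ} [NeZero k]
set_option linter.unusedSectionVars false

lemma zmod_nz (hk : 4 ≤ k) {n : ℕ} (h0 : 0 < n) (h3 : n ≤ 3) : (n : ZMod k) ≠ 0 := by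
  rw [Ne, ZMod.natCast_eq_zero_iff]
  intro hd
  have := Nat.le_of_dvd h0 hd
  omega

lemma one_nz (hk : 4 ≤ k) : (1 : ZMod k) ≠ 0 := by
  have := zmod_nz (k := k) hk (n := 1) (by norm_num) (by norm_num); simpa using this

lemma two_nz (hk : 4 ≤ k) : (2 : ZMod k) ≠ 0 := by
  have := zmod_nz (k := k) hk (n := 2) (by norm_num) (by norm_num); simpa using this

lemma three_nz (hk : 4 ≤ k) : (3 : ZMod k) ≠ 0 := by
  have := zmod_nz (k := k) hk (n := 3) (by norm_num) (by norm_num); simpa using this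

lemma reach_x (u : Vtx k) : (Gk k).Reachable u (Sum.inl false) := by
  rcases u with a | ⟨b, i⟩
  · cases a
    · exact Reachable.refl _
    · exact ⟨Walk.cons (adj_ys 0) (Walk.cons (((adj_st 0 0).mpr (Or.inl rfl)))
        (Walk.cons (adj_xt 0).symm Walk.nil))⟩
  · cases b
    · exact ⟨Walk.cons ((adj_st i i).mpr (Or.inl rfl)) (Walk.cons (adj_xt i).symm Walk.nil)⟩
    · exact ⟨Walk.cons (adj_xt i).symm Walk.nil⟩

lemma conn : (Gk k).Connected := by
  rw [connected_iff]
  exact ⟨fun u v => (reach_x u).trans (reach_x v).symm, ⟨Sum.inl false⟩⟩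

lemma dist_st_le (hk : 4 ≤ k) (i j : ZMod k) :
    (Gk k).dist (Sum.inr (false, i)) (Sum.inr (true, j)) ≤ 2 := by
  by_cases hadj : j = i ∨ j = i + 1
  · exact le_trans (SimpleGraph.dist_eq_one_iff_adj.mpr ((adj_st i j).mpr hadj)).le (by norm_num)
  · push_neg at hadj
    by_cases hm : j = i - 1
    · refine dist_le_two' (Sum.inr (false, i - 2)) ((adj_ss i (i - 2)).mpr ⟨?_, ?_, ?_⟩)
        ((adj_st (i - 2) j).mpr (Or.inr ?_))
      · intro h; exact two_nz hk (by linear_combination h)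
      · intro h; exact three_nz hk (by linear_combination -h)
      · intro h; exact one_nz hk (by linear_combination h)
      · rw [hm]; ring
    · refine dist_le_two' (Sum.inr (true, i)) ((adj_st i i).mpr (Or.inl rfl))
        ((adj_tt i j).mpr ⟨?_, hadj.2, ?_⟩)
      · intro h; exact hadj.1 h.symm
      · intro h; exact hm (by linear_combination -h)

lemma ecc_s (hk : 4 ≤ k) (i : ZMod k) : graphEcc (Gk k) (Sum.inr (false, i)) = 2 := by
  apply le_antisymm
  · apply Finset.sup_le
    rintro (a | ⟨b, j⟩) -
    · cases a
      · exact dist_le_two' (Sum.inr (true, i)) ((adj_st i i).mpr (Or.inl rfl)) (adj_xt i).symm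
      · exact le_trans (SimpleGraph.dist_eq_one_iff_adj.mpr (adj_ys i).symm).le (by norm_num)
    · cases b
      · by_cases hij : i = j
        · subst hij; simp [SimpleGraph.dist_self]
        · exact dist_le_two' (Sum.inl true) (adj_ys i).symm (adj_ys j)
      · exact dist_st_le hk i j
  · calc (2 : ℕ) ≤ (Gk k).dist (Sum.inr (false, i)) (Sum.inr (false, i + 1)) := by
          apply two_le_dist' (conn.preconnected _ _)
          · intro h
            have : i = i + 1 := by simpa using h
            exact one_nz hk (by linear_combination -this)
          · rw [adj_ss]
            rintro ⟨-, h2, -⟩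
            exact h2 rfl
      _ ≤ _ := Finset.le_sup (Finset.mem_univ _)

lemma ecc_t (hk : 4 ≤ k) (j : ZMod k) : graphEcc (Gk k) (Sum.inr (true, j)) = 2 := by
  apply le_antisymm
  · apply Finset.sup_le
    rintro (a | ⟨b, i⟩) -
    · cases a
      · exact le_trans (SimpleGraph.dist_eq_one_iff_adj.mpr (adj_xt j).symm).le (by norm_num)
      · exact dist_le_two' (Sum.inr (false, j)) ((adj_st j j).mpr (Or.inl rfl)).symm
          (adj_ys j).symm
    · cases b
      · rw [SimpleGraph.dist_comm]
        exact dist_st_le hk i j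
      · by_cases hij : j = i
        · subst hij; simp [SimpleGraph.dist_self]
        · exact dist_le_two' (Sum.inl false) (adj_xt j).symm (adj_xt i)
  · calc (2 : ℕ) ≤ (Gk k).dist (Sum.inr (true, j)) (Sum.inr (true, j + 1)) := by
          apply two_le_dist' (conn.preconnected _ _)
          · intro h
            have : j = j + 1 := by simpa using h
            exact one_nz hk (by linear_combination -this)
          · rw [adj_tt]
            rintro ⟨-, h2, -⟩
            exact h2 rfl
      _ ≤ _ := Finset.le_sup (Finset.mem_univ _)

lemma ecc_x (hk : 4 ≤ k) : graphEcc (Gk k) (Sum.inl false : Vtx k) = 3 := by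
  apply le_antisymm
  · apply Finset.sup_le
    rintro (a | ⟨b, j⟩) -
    · cases a
      · simp [SimpleGraph.dist_self]
      · exact dist_le_three' (Sum.inr (true, 0)) (Sum.inr (false, 0)) (adj_xt 0)
          ((adj_st 0 0).mpr (Or.inl rfl)).symm (adj_ys 0).symm
    · cases b
      · exact le_trans (dist_le_two' (Sum.inr (true, j)) (adj_xt j)
          ((adj_st j j).mpr (Or.inl rfl)).symm) (by norm_num)
      · exact le_trans (SimpleGraph.dist_eq_one_iff_adj.mpr (adj_xt j)).le (by norm_num)
  · calc (3 : ℕ) ≤ (Gk k).dist (Sum.inl false : Vtx k) (Sum.inl true) := by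
          apply three_le_dist' (conn.preconnected _ _) (by simp) adj_xy
          rintro (a | ⟨b, j⟩) hw
          · cases a
            · exact absurd hw ((Gk k).irrefl)
            · exact absurd hw adj_xy
          · cases b
            · exact absurd hw (adj_xs j)
            · intro h; exact adj_yt j h.symm
      _ ≤ _ := Finset.le_sup (Finset.mem_univ _)

lemma ecc_y (hk : 4 ≤ k) : graphEcc (Gk k) (Sum.inl true : Vtx k) = 3 := by
  apply le_antisymm
  · apply Finset.sup_le
    rintro (a | ⟨b, j⟩) -
    · cases a
      · exact dist_le_three' (Sum.inr (false, 0)) (Sum.inr (true, 0)) (adj_ys 0)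
          ((adj_st 0 0).mpr (Or.inl rfl)) (adj_xt 0).symm
      · simp [SimpleGraph.dist_self]
    · cases b
      · exact le_trans (SimpleGraph.dist_eq_one_iff_adj.mpr (adj_ys j)).le (by norm_num)
      · exact le_trans (dist_le_two' (Sum.inr (false, j)) (adj_ys j)
          ((adj_st j j).mpr (Or.inl rfl))) (by norm_num)
  · calc (3 : ℕ) ≤ (Gk k).dist (Sum.inl true : Vtx k) (Sum.inl false) := by
          apply three_le_dist' (conn.preconnected _ _) (by simp)
            (fun h => adj_xy h.symm)
          rintro (a | ⟨b, j⟩) hw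
          · cases a
            · exact absurd hw (fun h => adj_xy h.symm)
            · exact absurd hw ((Gk k).irrefl)
          · cases b
            · intro h; exact adj_xs j h.symm
            · exact absurd hw (adj_yt j)
      _ ≤ _ := Finset.le_sup (Finset.mem_univ _)


lemma ecc_ge_two (hk : 4 ≤ k) (v : Vtx k) : 2 ≤ graphEcc (Gk k) v := by
  rcases v with a | ⟨b, i⟩
  · cases a
    · rw [ecc_x hk]; norm_num
    · rw [ecc_y hk]; norm_num
  · cases b
    · rw [ecc_s hk]
    · rw [ecc_t hk]

lemma radius_eq (hk : 4 ≤ k) : sInf (Set.range (graphEcc (Gk k))) = 2 := by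
  apply le_antisymm
  · exact Nat.sInf_le ⟨Sum.inr (false, 0), ecc_s hk 0⟩
  · apply le_csInf (Set.range_nonempty _)
    rintro r ⟨v, rfl⟩
    exact ecc_ge_two hk v

lemma central_set_eq (hk : 4 ≤ k) :
    {v : Vtx k | graphEcc (Gk k) v = sInf (Set.range (graphEcc (Gk k)))} =
      Set.range (Sum.inr : Bool × ZMod k → Vtx k) := by
  rw [radius_eq hk]
  ext v
  rcases v with a | ⟨b, i⟩
  · cases a
    · simp [ecc_x hk]
    · simp [ecc_y hk]
  · cases b
    · simp [ecc_s hk]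
    · simp [ecc_t hk]

lemma central_card (hk : 4 ≤ k) :
    Nat.card {v : Vtx k | graphEcc (Gk k) v = sInf (Set.range (graphEcc (Gk k)))} = 2 * k := by
  rw [central_set_eq hk, Nat.card_range_of_injective Sum.inr_injective]
  simp [Nat.card_eq_fintype_card, ZMod.card]

lemma nbr_x :
    (Gk k).neighborSet (Sum.inl false) = Set.range (fun j : ZMod k => Sum.inr (true, j)) := by
  ext u
  rcases u with a | ⟨b, j⟩
  · cases a
    · exact iff_of_false ((Gk k).irrefl) (by simp)
    · exact iff_of_false adj_xy (by simp)
  · cases b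
    · exact iff_of_false (adj_xs j) (by simp)
    · exact iff_of_true (adj_xt j) ⟨j, rfl⟩

lemma nbr_y :
    (Gk k).neighborSet (Sum.inl true) = Set.range (fun j : ZMod k => Sum.inr (false, j)) := by
  ext u
  rcases u with a | ⟨b, j⟩
  · cases a
    · exact iff_of_false (fun h => adj_xy h.symm) (by simp)
    · exact iff_of_false ((Gk k).irrefl) (by simp)
  · cases b
    · exact iff_of_true (adj_ys j) ⟨j, rfl⟩
    · exact iff_of_false (adj_yt j) (by simp)

lemma deg_x : ((Gk k).neighborSet (Sum.inl false)).ncard = k := by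
  rw [nbr_x, ← Nat.card_coe_set_eq,
    Nat.card_range_of_injective (fun a b h => by simpa using h)]
  simp [Nat.card_eq_fintype_card, ZMod.card]

lemma deg_y : ((Gk k).neighborSet (Sum.inl true)).ncard = k := by
  rw [nbr_y, ← Nat.card_coe_set_eq,
    Nat.card_range_of_injective (fun a b h => by simpa using h)]
  simp [Nat.card_eq_fintype_card, ZMod.card]


lemma triple_ncard (hk : 4 ≤ k) (i : ZMod k) :
    ({i - 1, i, i + 1} : Set (ZMod k)).ncard = 3 := by
  rw [Set.ncard_insert_of_notMem (by
      simp only [Set.mem_insert_iff, Set.mem_singleton_iff]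
      rintro (h | h)
      · exact one_nz hk (by linear_combination -h)
      · exact two_nz hk (by linear_combination -h))]
  rw [Set.ncard_pair (by
      intro h
      exact one_nz hk (by linear_combination -h))]

lemma compl_triple_ncard (hk : 4 ≤ k) (i : ZMod k) :
    (({i - 1, i, i + 1} : Set (ZMod k))ᶜ).ncard = k - 3 := by
  have h := Set.ncard_add_ncard_compl ({i - 1, i, i + 1} : Set (ZMod k))
  rw [triple_ncard hk i] at h
  have hcard : Nat.card (ZMod k) = k := by simp [Nat.card_eq_fintype_card, ZMod.card]
  omega

lemma nbr_s (hk : 4 ≤ k) (i : ZMod k) :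
    (Gk k).neighborSet (Sum.inr (false, i)) =
      ({Sum.inl true, Sum.inr (true, i), Sum.inr (true, i + 1)} : Set (Vtx k)) ∪
        (fun j : ZMod k => (Sum.inr (false, j) : Vtx k)) '' ({i - 1, i, i + 1}ᶜ) := by
  ext u
  rcases u with a | ⟨b, j⟩
  · cases a
    · refine iff_of_false (fun h => adj_xs i h.symm) (by simp)
    · refine iff_of_true (adj_ys i).symm (by simp)
  · cases b
    · constructor
      · intro h
        rw [SimpleGraph.mem_neighborSet, adj_ss] at h
        obtain ⟨h1, h2, h3⟩ := h
        refine Set.mem_union_right _ ⟨j, ?_, rfl⟩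
        simp only [Set.mem_compl_iff, Set.mem_insert_iff, Set.mem_singleton_iff]
        push_neg
        exact ⟨fun h => h3 (by linear_combination -h), fun h => h1 h.symm, h2⟩
      · intro h
        rcases h with h | ⟨j', hj', hey⟩
        · simp at h
        · have hjj : j' = j := by simpa using hey
          subst hjj
          rw [SimpleGraph.mem_neighborSet, adj_ss]
          simp only [Set.mem_compl_iff, Set.mem_insert_iff, Set.mem_singleton_iff] at hj'
          push_neg at hj'
          exact ⟨fun h => hj'.2.1 h.symm, hj'.2.2, fun h => hj'.1 (by linear_combination -h)⟩
    · rw [SimpleGraph.mem_neighborSet, adj_st]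
      constructor
      · rintro (h | h)
        · subst h; exact Or.inl (by simp)
        · subst h; exact Or.inl (by simp)
      · intro h
        rcases h with h | ⟨j', hj', hey⟩
        · simp only [Set.mem_insert_iff, Set.mem_singleton_iff] at h
          rcases h with h | h | h
          · exact absurd h (by simp)
          · exact Or.inl (by simpa using h)
          · exact Or.inr (by simpa using h)
        · exact absurd hey (by simp)

lemma nbr_t (hk : 4 ≤ k) (j : ZMod k) :
    (Gk k).neighborSet (Sum.inr (true, j)) =
      ({Sum.inl false, Sum.inr (false, j), Sum.inr (false, j - 1)} : Set (Vtx k)) ∪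
        (fun i : ZMod k => (Sum.inr (true, i) : Vtx k)) '' ({j - 1, j, j + 1}ᶜ) := by
  ext u
  rcases u with a | ⟨b, i⟩
  · cases a
    · refine iff_of_true (adj_xt j).symm (by simp)
    · refine iff_of_false (fun h => adj_yt j h.symm) (by simp)
  · cases b
    · have hadj : (Gk k).Adj (Sum.inr (true, j)) (Sum.inr (false, i)) ↔ (j = i ∨ j = i + 1) := by
        rw [SimpleGraph.adj_comm, adj_st]
      rw [SimpleGraph.mem_neighborSet, hadj]
      constructor
      · rintro (h | h)
        · subst h; exact Or.inl (by simp)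
        · have : i = j - 1 := by linear_combination -h
          subst this; exact Or.inl (by simp)
      · intro h
        rcases h with h | ⟨i', hi', hey⟩
        · simp only [Set.mem_insert_iff, Set.mem_singleton_iff] at h
          rcases h with h | h | h
          · exact absurd h (by simp)
          · have : i = j := by simpa using h
            exact Or.inl this.symm
          · have : i = j - 1 := by simpa using h
            exact Or.inr (by linear_combination -this)
        · exact absurd hey (by simp)
    · constructor
      · intro h
        rw [SimpleGraph.mem_neighborSet, adj_tt] at h
        obtain ⟨h1, h2, h3⟩ := h
        refine Set.mem_union_right _ ⟨i, ?_, rfl⟩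
        simp only [Set.mem_compl_iff, Set.mem_insert_iff, Set.mem_singleton_iff]
        push_neg
        exact ⟨fun h => h3 (by linear_combination -h), fun h => h1 h.symm, h2⟩
      · intro h
        rcases h with h | ⟨i', hi', hey⟩
        · simp at h
        · have hii : i' = i := by simpa using hey
          subst hii
          rw [SimpleGraph.mem_neighborSet, adj_tt]
          simp only [Set.mem_compl_iff, Set.mem_insert_iff, Set.mem_singleton_iff] at hi'
          push_neg at hi'
          exact ⟨fun h => hi'.2.1 h.symm, hi'.2.2, fun h => hi'.1 (by linear_combination -h)⟩

lemma deg_s (hk : 4 ≤ k) (i : ZMod k) :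
    ((Gk k).neighborSet (Sum.inr (false, i))).ncard = k := by
  rw [nbr_s hk i]
  rw [Set.ncard_union_eq (by
      rw [Set.disjoint_left]
      rintro u hu ⟨j, hj, rfl⟩
      simp at hu) (Set.toFinite _) (Set.toFinite _)]
  rw [Set.ncard_image_of_injective _ (fun a b h => by simpa using h)]
  rw [compl_triple_ncard hk i]
  have h3 : ({Sum.inl true, Sum.inr (true, i), Sum.inr (true, i + 1)} : Set (Vtx k)).ncard = 3 := by
    rw [Set.ncard_insert_of_notMem (by simp)]
    rw [Set.ncard_pair (by
      simp only [ne_eq, Sum.inr.injEq, Prod.mk.injEq, true_and]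
      intro h
      exact one_nz hk (by linear_combination -h))]
  rw [h3]
  omega

lemma deg_t (hk : 4 ≤ k) (j : ZMod k) :
    ((Gk k).neighborSet (Sum.inr (true, j))).ncard = k := by
  rw [nbr_t hk j]
  rw [Set.ncard_union_eq (by
      rw [Set.disjoint_left]
      rintro u hu ⟨i, hi, rfl⟩
      simp at hu) (Set.toFinite _) (Set.toFinite _)]
  rw [Set.ncard_image_of_injective _ (fun a b h => by simpa using h)]
  rw [compl_triple_ncard hk j]
  have h3 : ({Sum.inl false, Sum.inr (false, j), Sum.inr (false, j - 1)} : Set (Vtx k)).ncard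
      = 3 := by
    rw [Set.ncard_insert_of_notMem (by simp)]
    rw [Set.ncard_pair (by
      simp only [ne_eq, Sum.inr.injEq, Prod.mk.injEq, true_and]
      intro h
      exact one_nz hk (by linear_combination h))]
  rw [h3]
  omega

end Main

section Transport
variable {V V' : Type*} {G : SimpleGraph V} {G' : SimpleGraph V'}

lemma iso_dist_le (e : G ≃g G') (u v : V) : G'.dist (e u) (e v) ≤ G.dist u v := by
  by_cases h : G.Reachable u v
  · obtain ⟨w, hw⟩ := h.exists_walk_length_eq_dist
    calc G'.dist (e u) (e v) ≤ (w.map e.toHom).length := SimpleGraph.dist_le _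
      _ = w.length := by simp
      _ = G.dist u v := hw
  · have h' : ¬ G'.Reachable (e u) (e v) := by
      intro hr
      apply h
      have := hr.map e.symm.toHom
      simpa using this
    rw [SimpleGraph.dist_eq_zero_of_not_reachable h,
      SimpleGraph.dist_eq_zero_of_not_reachable h']

lemma iso_dist (e : G ≃g G') (u v : V) : G'.dist (e u) (e v) = G.dist u v := by
  apply le_antisymm (iso_dist_le e u v)
  have := iso_dist_le e.symm (e u) (e v)
  simpa using this

lemma iso_ecc [Fintype V] [Fintype V'] (e : G ≃g G') (v : V) :
    graphEcc G' (e v) = graphEcc G v := by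
  classical
  unfold graphEcc
  have himg : (Finset.univ : Finset V') = Finset.univ.image e := by
    ext u
    simp only [Finset.mem_univ, Finset.mem_image, true_iff, true_and]
    exact ⟨e.symm u, by simp⟩
  rw [himg, Finset.sup_image]
  apply Finset.sup_congr rfl
  intro u _
  exact iso_dist e v u

lemma iso_radius [Fintype V] [Fintype V'] (e : G ≃g G') :
    sInf (Set.range (graphEcc G')) = sInf (Set.range (graphEcc G)) := by
  congr 1
  ext r
  constructor
  · rintro ⟨v', rfl⟩
    refine ⟨e.symm v', ?_⟩
    have := iso_ecc e (e.symm v')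
    rw [RelIso.apply_symm_apply] at this
    exact this.symm
  · rintro ⟨v, rfl⟩
    exact ⟨e v, iso_ecc e v⟩

end Transport


theorem exists_regular_almostSelfCentered_order (k : ℕ) (hk : 4 ≤ k) :
    ∃ G : SimpleGraph (Fin (2 * k + 2)), IsKRegular G k ∧ IsAlmostSelfCentered G := by
  haveI : NeZero k := ⟨by omega⟩
  have hcard : Fintype.card (Vtx k) = 2 * k + 2 := by
    simp [ZMod.card]
    ring
  let e0 : Vtx k ≃ Fin (2 * k + 2) := Fintype.equivFinOfCardEq hcard
  let e : Gk k ≃g (Gk k).map e0.toEmbedding := SimpleGraph.Iso.map e0 (Gk k)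
  refine ⟨(Gk k).map e0.toEmbedding, ?_, ?_, ?_⟩
  · intro v'
    have hv' : e (e0.symm v') = v' := by
      simp [e, SimpleGraph.Iso.map_apply]
    rw [← hv', ← Nat.card_coe_set_eq,
      Nat.card_congr (SimpleGraph.Iso.mapNeighborSet e (e0.symm v')).symm,
      Nat.card_coe_set_eq]
    rcases e0.symm v' with a | ⟨b, i⟩
    · cases a
      · exact deg_x
      · exact deg_y
    · cases b
      · exact deg_s hk i
      · exact deg_t hk i
  · rw [connected_iff]
    constructor
    · intro a b
      have := ((conn (k := k)).preconnected (e0.symm a) (e0.symm b)).map e.toHom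
      simpa [e, SimpleGraph.Iso.map_apply] using this
    · exact ⟨⟨0, by omega⟩⟩
  · show Nat.card {v' : Fin (2 * k + 2) |
        graphEcc ((Gk k).map e0.toEmbedding) v' =
          sInf (Set.range (graphEcc ((Gk k).map e0.toEmbedding)))} = _
    have hecc : ∀ v, graphEcc ((Gk k).map e0.toEmbedding) (e v) = graphEcc (Gk k) v :=
      iso_ecc e
    have hrad : sInf (Set.range (graphEcc ((Gk k).map e0.toEmbedding))) =
        sInf (Set.range (graphEcc (Gk k))) := iso_radius e
    have hset : {v' : Fin (2 * k + 2) |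
        graphEcc ((Gk k).map e0.toEmbedding) v' =
          sInf (Set.range (graphEcc ((Gk k).map e0.toEmbedding)))} =
        ⇑e0 '' {v | graphEcc (Gk k) v = sInf (Set.range (graphEcc (Gk k)))} := by
      ext v'
      simp only [Set.mem_setOf_eq, Set.mem_image]
      constructor
      · intro h
        refine ⟨e0.symm v', ?_, by simp⟩
        have h2 := hecc (e0.symm v')
        have h3 : e (e0.symm v') = v' := by simp [e, SimpleGraph.Iso.map_apply]
        rw [h3] at h2
        rw [← h2, ← hrad]
        exact h
      · rintro ⟨v, hv, rfl⟩
        have h3 : e v = e0 v := by simp [e, SimpleGraph.Iso.map_apply]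
        rw [← h3, hecc v, hrad]
        exact hv
    rw [hset, Nat.card_image_of_injective e0.injective, central_card hk, Fintype.card_fin]
    omega
end

section
/- Let G be an almost peripheral graph of order n ≥ 3. Then the number of edges of G is at most ⌊(n−1)²/2⌋. -/
open SimpleGraph

theorem size_le_of_almostPeripheral {V : Type*} [Fintype V]
    (G : SimpleGraph V) (n : ℕ) (hn : Fintype.card V = n) (h3 : 3 ≤ n)
    (hAP : IsAlmostPeripheral G) :
    G.edgeSet.ncard ≤ (n - 1) ^ 2 / 2 := by
  classical
  obtain ⟨hconn, hcard⟩ := hAP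
  set d := graphDiam G with hd
  have hne : Nonempty V := Fintype.card_pos_iff.mp (by omega)
  -- every vertex has eccentricity at least 1
  have hecc1 : ∀ w : V, 1 ≤ graphEcc G w := by
    intro w
    obtain ⟨u, hu⟩ := Fintype.exists_ne_of_one_lt_card (by omega) w
    have hdist : 1 ≤ G.dist w u := by
      have h0 : G.dist w u ≠ 0 := by
        intro h0
        rcases SimpleGraph.dist_eq_zero_iff_eq_or_not_reachable.mp h0 with h | h
        · exact hu h.symm
        · exact h (hconn.preconnected w u)
      omega
    calc 1 ≤ G.dist w u := hdist
      _ ≤ graphEcc G w := Finset.le_sup (Finset.mem_univ u)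
  -- ecc ≤ d always
  have heccle : ∀ w : V, graphEcc G w ≤ d := fun w => Finset.le_sup (Finset.mem_univ w)
  -- Nat.card of the peripheral set equals the filter card
  have hcard' : (Finset.univ.filter (fun v => graphEcc G v = d)).card = n - 1 := by
    rw [Nat.card_coe_set_eq, Set.ncard_eq_toFinset_card', Set.toFinset_setOf, hn] at hcard
    exact hcard
  -- there is a vertex with ecc < d
  have hwlt : ∃ w : V, graphEcc G w < d := by
    by_contra h
    push_neg at h
    have hall : ∀ w, graphEcc G w = d := fun w => le_antisymm (heccle w) (h w)
    have : (Finset.univ.filter (fun v => graphEcc G v = d)).card = n := by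
      rw [Finset.filter_true_of_mem (fun v _ => hall v), Finset.card_univ, hn]
    omega
  obtain ⟨w, hw⟩ := hwlt
  have hd2 : 2 ≤ d := by have := hecc1 w; omega
  -- peripheral vertices have degree ≤ n - 2
  have hdegP : ∀ v : V, graphEcc G v = d → G.degree v ≤ n - 2 := by
    intro v hv
    obtain ⟨u, -, hu⟩ := Finset.exists_mem_eq_sup Finset.univ Finset.univ_nonempty
      (fun u => G.dist v u)
    have hecceq : graphEcc G v = G.dist v u := hu
    have hdu : G.dist v u = d := by rw [← hecceq, hv]
    have hvu : v ≠ u := by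
      intro h; subst h; rw [SimpleGraph.dist_self] at hdu; omega
    have hadj : ¬ G.Adj v u := by
      intro h
      have : G.dist v u ≤ 1 := by
        have := SimpleGraph.dist_le (SimpleGraph.Walk.cons h SimpleGraph.Walk.nil)
        simpa using this
      omega
    have hsub : G.neighborFinset v ⊆ Finset.univ \ {v, u} := by
      intro x hx
      rw [SimpleGraph.mem_neighborFinset] at hx
      simp only [Finset.mem_sdiff, Finset.mem_univ, Finset.mem_insert,
        Finset.mem_singleton, true_and]
      push_neg
      constructor
      · intro h; subst h; exact G.irrefl hx
      · intro h; subst h; exact hadj hx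
    calc G.degree v = (G.neighborFinset v).card := rfl
      _ ≤ (Finset.univ \ ({v, u} : Finset V)).card := Finset.card_le_card hsub
      _ = n - 2 := by
          rw [Finset.card_sdiff_of_subset (Finset.subset_univ _), Finset.card_univ, hn,
            Finset.card_insert_of_notMem (by simpa using hvu), Finset.card_singleton]
  -- every vertex has degree ≤ n - 1
  have hdegAll : ∀ v : V, G.degree v ≤ n - 1 := by
    intro v
    have := G.degree_lt_card_verts v
    omega
  -- sum of degrees bound
  set P := Finset.univ.filter (fun v => graphEcc G v = d) with hP
  have hsplit : ∑ v ∈ P, G.degree v + ∑ v ∈ Finset.univ.filter (fun v => ¬ graphEcc G v = d), G.degree v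
      = ∑ v : V, G.degree v := Finset.sum_filter_add_sum_filter_not _ _ _
  have hcardQ : (Finset.univ.filter (fun v => ¬ graphEcc G v = d)).card = 1 := by
    rw [Finset.filter_not, Finset.card_sdiff_of_subset (Finset.filter_subset _ _),
      Finset.card_univ, hn, hcard']
    omega
  have hsumP : ∑ v ∈ P, G.degree v ≤ (n - 1) * (n - 2) := by
    calc ∑ v ∈ P, G.degree v ≤ P.card * (n - 2) := by
          apply Finset.sum_le_card_nsmul
          intro v hv
          exact hdegP v (by simpa [hP] using hv)
      _ = (n - 1) * (n - 2) := by rw [hcard']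
  have hsumQ : ∑ v ∈ Finset.univ.filter (fun v => ¬ graphEcc G v = d), G.degree v ≤ n - 1 := by
    calc _ ≤ (Finset.univ.filter (fun v => ¬ graphEcc G v = d)).card * (n - 1) :=
          Finset.sum_le_card_nsmul _ _ _ (fun v _ => hdegAll v)
      _ = n - 1 := by rw [hcardQ, one_mul]
  have hhand : ∑ v : V, G.degree v = 2 * G.edgeFinset.card :=
    G.sum_degrees_eq_twice_card_edges
  have hm : G.edgeSet.ncard = G.edgeFinset.card := by
    rw [← SimpleGraph.coe_edgeFinset, Set.ncard_coe_finset]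
  have h2m : 2 * G.edgeSet.ncard ≤ (n - 1) * (n - 2) + (n - 1) := by
    rw [hm, ← hhand, ← hsplit]
    omega
  have hsq : (n - 1) * (n - 2) + (n - 1) = (n - 1) ^ 2 := by
    have h : n - 2 + 1 = n - 1 := by omega
    rw [← h]; ring
  rw [Nat.le_div_iff_mul_le (by norm_num)]
  omega
end
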